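/- arXiv:0902.2312 — 8 statements merged into one kernel-verified Lean document; each statement's English description precedes it below -/
import Mathlib

section
/- Let φ be a reparametrization of [0,1], let J be a φ-stop interval, and suppose min J = sup_{J' < J} max J', where the supremum is over φ-stop intervals J' with J' < J. Then φ(J) = sup_{J' < J} φ(J'). -/
open Set Classical

/-- A reparametrization of the unit interval: continuous, weakly increasing,
maps `[0,1]` into `[0,1]`, preserves endpoints. -/
def Reparam (φ : ℝ → ℝ) : Prop :=
  ContinuousOn φ (Set.Icc 0 1) ∧ MonotoneOn φ (Set.Icc 0 1) ∧
  Set.MapsTo φ (Set.Icc 0 1) (Set.Icc 0 1) ∧ φ 0 = 0 ∧ φ 1 = 1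

/-- `J` is a stop interval of `φ`: a non-degenerate preimage of a point. -/
def IsStopIntervalOf (φ : ℝ → ℝ) (J : Set ℝ) : Prop :=
  ∃ t : ℝ, Set.Icc 0 1 ∩ φ ⁻¹' {t} = J ∧ J.Nontrivial

/-- `t` is a stop value of `φ`. -/
def IsStopValueOf (φ : ℝ → ℝ) (t : ℝ) : Prop :=
  (Set.Icc 0 1 ∩ φ ⁻¹' {t}).Nontrivial

/-- The natural order on disjoint intervals: every point of `J` is below every point of `J'`. -/
def IntLT (J J' : Set ℝ) : Prop := ∀ x ∈ J, ∀ y ∈ J', x < y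

/-- Supremum with the convention that the sup of the empty family is `0`. -/
noncomputable def sSup0 (S : Set ℝ) : ℝ := if S.Nonempty then sSup S else 0

/-- Infimum with the convention that the inf of the empty family is `1`. -/
noncomputable def sInf1 (S : Set ℝ) : ℝ := if S.Nonempty then sInf S else 1

/-- Condition (1) is necessary: if `min J` is the sup of the right endpoints of
the stop intervals below `J`, then the stop value of `J` is the sup of their
stop values. -/
theorem stmt_4 (φ : ℝ → ℝ) (hφ : Reparam φ) (J : Set ℝ) (t : ℝ)
    (hJ : Set.Icc 0 1 ∩ φ ⁻¹' {t} = J) (hnt : J.Nontrivial)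
    (h : sInf J = sSup {x | ∃ J', IsStopIntervalOf φ J' ∧ IntLT J' J ∧ x = sSup J'}) :
    t = sSup {t' | ∃ J', Set.Icc 0 1 ∩ φ ⁻¹' {t'} = J' ∧ J'.Nontrivial ∧ IntLT J' J} := by
  obtain ⟨hc, hmono, hmaps, hφ0, hφ1⟩ := hφ
  set F := {x | ∃ J', IsStopIntervalOf φ J' ∧ IntLT J' J ∧ x = sSup J'} with hFdef
  set S := {t' | ∃ J', Set.Icc 0 1 ∩ φ ⁻¹' {t'} = J' ∧ J'.Nontrivial ∧ IntLT J' J} with hSdef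
  have hJsub : J ⊆ Set.Icc (0:ℝ) 1 := by rw [← hJ]; exact Set.inter_subset_left
  have hJne : J.Nonempty := hnt.nonempty
  have hJclosed : IsClosed J := by
    rw [← hJ]
    exact hc.preimage_isClosed_of_isClosed isClosed_Icc isClosed_singleton
  have hbddJ : BddBelow J := ⟨0, fun x hx => (hJsub hx).1⟩
  have hmJ : sInf J ∈ J := hJclosed.csInf_mem hJne hbddJ
  set m := sInf J with hmdef
  have hmI : m ∈ Set.Icc (0:ℝ) 1 := hJsub hmJ
  have hφm : φ m = t := by
    have := hmJ; rw [← hJ] at this; exact this.2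
  have hub : ∀ t' ∈ S, t' ≤ t := by
    rintro t' ⟨J', hJ', hnt', hlt⟩
    obtain ⟨x, hx⟩ := hnt'.nonempty
    have hx' : x ∈ Set.Icc (0:ℝ) 1 ∩ φ ⁻¹' {t'} := by rw [hJ']; exact hx
    have := hmono hx'.1 hmI (le_of_lt (hlt x hx m hmJ))
    rw [hx'.2, hφm] at this; exact this
  by_cases hSne : S.Nonempty
  · have hbddS : BddAbove S := ⟨t, hub⟩
    have hle : sSup S ≤ t := csSup_le hSne hub
    have hFne : F.Nonempty := by
      obtain ⟨t', J', h1, h2, h3⟩ := hSne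
      exact ⟨sSup J', J', ⟨t', h1, h2⟩, h3, rfl⟩
    have hFub : ∀ b ∈ F, b ≤ m := by
      rintro b ⟨J', ⟨t'', hJ'', hnt''⟩, hlt, rfl⟩
      exact csSup_le hnt''.nonempty (fun x hx => le_of_lt (hlt x hx m hmJ))
    have hge : t ≤ sSup S := by
      refine le_of_forall_pos_le_add ?_
      intro ε hε
      obtain ⟨δ, hδ, hδ'⟩ := Metric.continuousWithinAt_iff.mp (hc m hmI) ε hε
      have hlt1 : m - δ < sSup F := by rw [← h]; linarith
      obtain ⟨b, hbF, hb⟩ := exists_lt_of_lt_csSup hFne hlt1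
      obtain ⟨J', ⟨t'', hJ'', hnt''⟩, hltJ, rfl⟩ := hbF
      obtain ⟨x, hxJ', hx⟩ := exists_lt_of_lt_csSup hnt''.nonempty hb
      have hx' : x ∈ Set.Icc (0:ℝ) 1 ∩ φ ⁻¹' {t''} := by rw [hJ'']; exact hxJ'
      have hxm : x < m := hltJ x hxJ' m hmJ
      have hdist : dist x m < δ := by
        rw [Real.dist_eq, abs_of_neg (by linarith)]; linarith
      have := hδ' hx'.1 hdist
      rw [hx'.2, hφm, Real.dist_eq] at this
      have ht'' : t'' ∈ S := ⟨J', hJ'', hnt'', hltJ⟩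
      have : t - t'' < ε := lt_of_le_of_lt (le_abs_self _) (by rwa [abs_sub_comm] at this)
      have := le_csSup hbddS ht''
      linarith
    linarith
  · have hSe : S = ∅ := Set.not_nonempty_iff_eq_empty.mp hSne
    have hFe : F = ∅ := by
      rw [Set.eq_empty_iff_forall_notMem]
      rintro b ⟨J', ⟨t'', hJ'', hnt''⟩, hlt, rfl⟩
      have ht : t'' ∈ S := ⟨J', hJ'', hnt'', hlt⟩
      rw [hSe] at ht; exact ht
    have hm0 : m = 0 := by rw [h, hFe, Real.sSup_empty]
    rw [hSe, Real.sSup_empty, ← hφm, hm0, hφ0]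
end

section
/- Let φ be a reparametrization of [0,1] and let 0 < z < 1 be a point not contained in any φ-stop interval. If sup_{J' < z} max J' = inf_{z < J''} min J'' (suprema/infima over φ-stop intervals lying entirely below, respectively above, z), then sup_{J' < z} φ(J') = inf_{z < J''} φ(J''). -/
open Set Classical

/-- Basic facts about a stop interval. -/
lemma stop_facts (φ : ℝ → ℝ) (hcont : ContinuousOn φ (Set.Icc 0 1)) (t : ℝ) (J : Set ℝ)
    (hJ : Set.Icc 0 1 ∩ φ ⁻¹' {t} = J) (hnt : J.Nontrivial) :
    J ⊆ Set.Icc 0 1 ∧ BddAbove J ∧ BddBelow J ∧ sSup J ∈ J ∧ sInf J ∈ J ∧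
      sInf J < sSup J ∧ φ (sSup J) = t ∧ φ (sInf J) = t := by
  have hsub : J ⊆ Set.Icc 0 1 := by rw [← hJ]; exact Set.inter_subset_left
  have hBA : BddAbove J := BddAbove.mono hsub bddAbove_Icc
  have hBB : BddBelow J := BddBelow.mono hsub bddBelow_Icc
  have hcl : IsClosed J := by
    rw [← hJ]; exact hcont.preimage_isClosed_of_isClosed isClosed_Icc isClosed_singleton
  have hne : J.Nonempty := hnt.nonempty
  have hsup : sSup J ∈ J := hcl.csSup_mem hne hBA
  have hinf : sInf J ∈ J := hcl.csInf_mem hne hBB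
  have hlt : sInf J < sSup J := by
    obtain ⟨a, ha, b, hb, hab⟩ := hnt
    rcases hab.lt_or_gt with hlt | hlt
    · exact lt_of_le_of_lt (csInf_le hBB ha) (lt_of_lt_of_le hlt (le_csSup hBA hb))
    · exact lt_of_le_of_lt (csInf_le hBB hb) (lt_of_lt_of_le hlt (le_csSup hBA ha))
  have hvs : φ (sSup J) = t := by
    have h2 : sSup J ∈ Set.Icc 0 1 ∩ φ ⁻¹' {t} := by rw [hJ]; exact hsup
    exact h2.2
  have hvi : φ (sInf J) = t := by
    have h2 : sInf J ∈ Set.Icc 0 1 ∩ φ ⁻¹' {t} := by rw [hJ]; exact hinf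
    exact h2.2
  exact ⟨hsub, hBA, hBB, hsup, hinf, hlt, hvs, hvi⟩

/-- Condition (3) is necessary: for `z ∈ (0,1)` in no stop interval, if the sup
of right endpoints of stop intervals below `z` equals the inf of left endpoints
of stop intervals above `z`, the same holds for the corresponding stop values. -/
theorem stmt_5 (φ : ℝ → ℝ) (hφ : Reparam φ) (z : ℝ) (hz : z ∈ Set.Ioo (0:ℝ) 1)
    (hnot : ∀ J, IsStopIntervalOf φ J → z ∉ J)
    (h : sSup {x | ∃ J', IsStopIntervalOf φ J' ∧ sSup J' < z ∧ x = sSup J'} =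
         sInf {x | ∃ J'', IsStopIntervalOf φ J'' ∧ z < sInf J'' ∧ x = sInf J''}) :
    sSup {t' | ∃ J', Set.Icc 0 1 ∩ φ ⁻¹' {t'} = J' ∧ J'.Nontrivial ∧ sSup J' < z} =
    sInf {t'' | ∃ J'', Set.Icc 0 1 ∩ φ ⁻¹' {t''} = J'' ∧ J''.Nontrivial ∧ z < sInf J''} := by
  obtain ⟨hcont, hmono, hmaps, h0, h1⟩ := hφ
  obtain ⟨hz0, hz1⟩ := hz
  have hzI : z ∈ Set.Icc (0:ℝ) 1 := ⟨le_of_lt hz0, le_of_lt hz1⟩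
  set Sint := {x | ∃ J', IsStopIntervalOf φ J' ∧ sSup J' < z ∧ x = sSup J'} with hSintdef
  set Tint := {x | ∃ J'', IsStopIntervalOf φ J'' ∧ z < sInf J'' ∧ x = sInf J''} with hTintdef
  set S := {t' | ∃ J', Set.Icc 0 1 ∩ φ ⁻¹' {t'} = J' ∧ J'.Nontrivial ∧ sSup J' < z} with hSdef
  set T := {t'' | ∃ J'', Set.Icc 0 1 ∩ φ ⁻¹' {t''} = J'' ∧ J''.Nontrivial ∧ z < sInf J''} with hTdef
  -- boundedness facts
  have hSintA : ∀ x ∈ Sint, x < z := by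
    rintro x ⟨J', _, hlt, rfl⟩; exact hlt
  have hTintB : ∀ x ∈ Tint, z < x := by
    rintro x ⟨J'', _, hlt, rfl⟩; exact hlt
  have hSintBdd : BddAbove Sint := ⟨z, fun x hx => le_of_lt (hSintA x hx)⟩
  have hTintBdd : BddBelow Tint := ⟨z, fun x hx => le_of_lt (hTintB x hx)⟩
  have hSub : ∀ t' ∈ S, t' ≤ φ z := by
    rintro t' ⟨J', hJ', hnt, hlt⟩
    obtain ⟨hsub, hBA, hBB, hsupm, _, _, hvs, _⟩ := stop_facts φ hcont t' J' hJ' hnt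
    rw [← hvs]
    exact hmono (hsub hsupm) hzI (le_of_lt hlt)
  have hTlb : ∀ t'' ∈ T, φ z ≤ t'' := by
    rintro t'' ⟨J'', hJ'', hnt, hlt⟩
    obtain ⟨hsub, hBA, hBB, _, hinfm, _, _, hvi⟩ := stop_facts φ hcont t'' J'' hJ'' hnt
    rw [← hvi]
    exact hmono hzI (hsub hinfm) (le_of_lt hlt)
  have hSBdd : BddAbove S := ⟨φ z, hSub⟩
  have hTBdd : BddBelow T := ⟨φ z, hTlb⟩
  -- nonemptiness correspondences
  have hSS : Sint.Nonempty ↔ S.Nonempty := by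
    constructor
    · rintro ⟨x, J', ⟨t, hJ', hnt⟩, hlt, rfl⟩
      exact ⟨t, J', hJ', hnt, hlt⟩
    · rintro ⟨t, J', hJ', hnt, hlt⟩
      exact ⟨sSup J', J', ⟨t, hJ', hnt⟩, hlt, rfl⟩
  have hTT : Tint.Nonempty ↔ T.Nonempty := by
    constructor
    · rintro ⟨x, J'', ⟨t, hJ'', hnt⟩, hlt, rfl⟩
      exact ⟨t, J'', hJ'', hnt, hlt⟩
    · rintro ⟨t, J'', hJ'', hnt, hlt⟩
      exact ⟨sInf J'', J'', ⟨t, hJ'', hnt⟩, hlt, rfl⟩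
  by_cases hSne : Sint.Nonempty
  · by_cases hTne : Tint.Nonempty
    · -- main case: both nonempty; h forces sSup Sint = sInf Tint = z
      have hAz : sSup Sint ≤ z := csSup_le hSne (fun x hx => le_of_lt (hSintA x hx))
      have hBz : z ≤ sInf Tint := le_csInf hTne (fun x hx => le_of_lt (hTintB x hx))
      have hA : sSup Sint = z := le_antisymm hAz (by rw [h]; exact hBz)
      have hB : sInf Tint = z := le_antisymm (by rw [← h]; exact hAz) hBz
      -- continuity at z
      have hca : ContinuousAt φ z := by
        have := hcont z hzI
        exact this.continuousAt (Icc_mem_nhds hz0 hz1)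
      have hSneS : S.Nonempty := hSS.mp hSne
      have hTneT : T.Nonempty := hTT.mp hTne
      have hsupS : sSup S = φ z := by
        refine le_antisymm (csSup_le hSneS hSub) (le_of_forall_pos_le_add ?_)
        intro ε hε
        obtain ⟨δ, hδ, hδε⟩ := Metric.continuousAt_iff.mp hca ε hε
        have : z - δ < sSup Sint := by rw [hA]; linarith
        obtain ⟨x, hxmem, hxgt⟩ := exists_lt_of_lt_csSup hSne this
        obtain ⟨J', hstop, hlt, rfl⟩ := hxmem
        obtain ⟨t, hJ', hnt⟩ := hstop
        obtain ⟨hsub, hBA, hBB, hsupm, _, _, hvs, _⟩ := stop_facts φ hcont t J' hJ' hnt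
        have hdist : dist (sSup J') z < δ := by
          rw [Real.dist_eq, abs_of_nonpos (by linarith)]; linarith
        have := hδε hdist
        rw [Real.dist_eq] at this
        have h1 : φ z - ε < φ (sSup J') := by
          rcases abs_lt.mp this with ⟨hl, hr⟩; linarith
        have h2 : φ (sSup J') ≤ sSup S := by
          refine le_csSup hSBdd ?_
          rw [hvs]; exact ⟨J', hJ', hnt, hlt⟩
        linarith
      have hinfT : sInf T = φ z := by
        refine le_antisymm ?_ (le_csInf hTneT hTlb)
        have key : ∀ ε : ℝ, 0 < ε → sInf T ≤ φ z + ε := by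
          intro ε hε
          obtain ⟨δ, hδ, hδε⟩ := Metric.continuousAt_iff.mp hca ε hε
          have : sInf Tint < z + δ := by rw [hB]; linarith
          obtain ⟨x, hxmem, hxlt⟩ := exists_lt_of_csInf_lt hTne this
          obtain ⟨J'', hstop, hlt, rfl⟩ := hxmem
          obtain ⟨t, hJ'', hnt⟩ := hstop
          obtain ⟨hsub, hBA, hBB, _, hinfm, _, _, hvi⟩ := stop_facts φ hcont t J'' hJ'' hnt
          have hdist : dist (sInf J'') z < δ := by
            rw [Real.dist_eq, abs_of_nonneg (by linarith)]; linarith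
          have := hδε hdist
          rw [Real.dist_eq] at this
          have h1 : φ (sInf J'') < φ z + ε := by
            rcases abs_lt.mp this with ⟨hl, hr⟩; linarith
          have h2 : sInf T ≤ φ (sInf J'') := by
            refine csInf_le hTBdd ?_
            rw [hvi]; exact ⟨J'', hJ'', hnt, hlt⟩
          linarith
        exact le_of_forall_pos_le_add key
      rw [hsupS, hinfT]
    ·
      exfalso
      rw [Set.not_nonempty_iff_eq_empty] at hTne
      rw [hTne, Real.sInf_empty] at h
      obtain ⟨x, hxmem⟩ := hSne
      obtain ⟨J', hstop, hlt, rfl⟩ := hxmem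
      obtain ⟨t, hJ', hnt⟩ := hstop
      obtain ⟨hsub, hBA, hBB, hsupm, hinfm, hio, _, _⟩ := stop_facts φ hcont t J' hJ' hnt
      have h0' : 0 < sSup J' := lt_of_le_of_lt (hsub hinfm).1 hio
      have : sSup J' ≤ sSup Sint := le_csSup hSintBdd ⟨J', ⟨t, hJ', hnt⟩, hlt, rfl⟩
      linarith [h ▸ this]
  · by_cases hTne : Tint.Nonempty
    · exfalso
      rw [Set.not_nonempty_iff_eq_empty] at hSne
      rw [hSne, Real.sSup_empty] at h
      have hBz : z ≤ sInf Tint := le_csInf hTne (fun x hx => le_of_lt (hTintB x hx))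
      rw [← h] at hBz
      linarith
    · rw [Set.not_nonempty_iff_eq_empty] at hSne hTne
      have hSe : S = ∅ := by
        rw [Set.eq_empty_iff_forall_notMem]
        intro t ht
        have : Sint.Nonempty := hSS.mpr ⟨t, ht⟩
        rw [hSne] at this; exact Set.not_nonempty_empty this
      have hTe : T = ∅ := by
        rw [Set.eq_empty_iff_forall_notMem]
        intro t ht
        have : Tint.Nonempty := hTT.mpr ⟨t, ht⟩
        rw [hTne] at this; exact Set.not_nonempty_empty this
      rw [hSe, hTe, Real.sSup_empty, Real.sInf_empty]
end

section
/- Let Δ be a countable set of pairwise disjoint non-degenerate closed subintervals of [0,1], C ⊆ [0,1] a set, and F : Δ → C an order-preserving bijection satisfying conditions (1)–(8) of the paper. Then the map φ_F defined on D = ⋃_{J∈Δ} J by φ_F(t) = F(J) for t ∈ J is weakly increasing and continuous on D. -/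
open Set Classical

/-- Conditions (1)–(8) of the paper for a family `Δ` of intervals with
prospective stop map `F` (conventions: empty sup is `0`, empty inf is `1`). -/
def StopConditions (Δ : Set (Set ℝ)) (F : Set ℝ → ℝ) : Prop :=
  (∀ J ∈ Δ, sInf J = sSup0 {x | ∃ J' ∈ Δ, IntLT J' J ∧ x = sSup J'} →
      F J = sSup0 {x | ∃ J' ∈ Δ, IntLT J' J ∧ x = F J'}) ∧
  (∀ J ∈ Δ, sSup J = sInf1 {x | ∃ J' ∈ Δ, IntLT J J' ∧ x = sInf J'} →
      F J = sInf1 {x | ∃ J' ∈ Δ, IntLT J J' ∧ x = F J'}) ∧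
  (∀ z ∈ Set.Ioo (0:ℝ) 1,
      sSup0 {x | ∃ J' ∈ Δ, sSup J' < z ∧ x = sSup J'} =
        sInf1 {x | ∃ J'' ∈ Δ, z < sInf J'' ∧ x = sInf J''} →
      sSup0 {x | ∃ J' ∈ Δ, sSup J' < z ∧ x = F J'} =
        sInf1 {x | ∃ J'' ∈ Δ, z < sInf J'' ∧ x = F J''}) ∧
  (∀ z ∈ Set.Ioo (0:ℝ) 1, (∀ J ∈ Δ, z ∉ J) →
      sSup0 {x | ∃ J' ∈ Δ, sSup J' < z ∧ x = sSup J'} <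
        sInf1 {x | ∃ J'' ∈ Δ, z < sInf J'' ∧ x = sInf J''} →
      sSup0 {x | ∃ J' ∈ Δ, sSup J' < z ∧ x = F J'} <
        sInf1 {x | ∃ J'' ∈ Δ, z < sInf J'' ∧ x = F J''}) ∧
  (sInf1 {x | ∃ J ∈ Δ, x = sInf J} = 0 → sInf1 {x | ∃ J ∈ Δ, x = F J} = 0) ∧
  ((∀ J ∈ Δ, (0:ℝ) ∉ J) → 0 < sInf1 {x | ∃ J ∈ Δ, x = sInf J} →
      0 < sInf1 {x | ∃ J ∈ Δ, x = F J}) ∧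
  (sSup0 {x | ∃ J ∈ Δ, x = sSup J} = 1 → sSup0 {x | ∃ J ∈ Δ, x = F J} = 1) ∧
  ((∀ J ∈ Δ, (1:ℝ) ∉ J) → sSup0 {x | ∃ J ∈ Δ, x = sSup J} < 1 →
      sSup0 {x | ∃ J ∈ Δ, x = F J} < 1)

noncomputable def psiF (Δ : Set (Set ℝ)) (F : Set ℝ → ℝ) (t : ℝ) : ℝ :=
  if h : ∃ J ∈ Δ, t ∈ J then F h.choose else 0

/-- Given a countable family `Δ` of disjoint non-degenerate closed intervals
and an order-preserving bijection `F : Δ → C` satisfying conditions (1)–(8),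
the map `φ_F`, defined on `D = ⋃ Δ` by `φ_F(t) = F(J)` for `t ∈ J`, is
weakly increasing and continuous on `D`. -/
theorem stmt_9 (Δ : Set (Set ℝ)) (C : Set ℝ) (F : Set ℝ → ℝ)
    (hcount : Δ.Countable)
    (hint : ∀ J ∈ Δ, ∃ a b : ℝ, 0 ≤ a ∧ a < b ∧ b ≤ 1 ∧ J = Set.Icc a b)
    (hdisj : Δ.Pairwise Disjoint)
    (hC : C ⊆ Set.Icc 0 1)
    (hFmem : ∀ J ∈ Δ, F J ∈ C)
    (hFsurj : ∀ c ∈ C, ∃ J ∈ Δ, F J = c)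
    (hFord : ∀ J ∈ Δ, ∀ J' ∈ Δ, (IntLT J J' ↔ F J < F J'))
    (hcond : StopConditions Δ F) :
    ∃ ψ : ℝ → ℝ, (∀ J ∈ Δ, ∀ t ∈ J, ψ t = F J) ∧
      MonotoneOn ψ (⋃₀ Δ) ∧ ContinuousOn ψ (⋃₀ Δ) := by
  classical
  obtain ⟨h1, h2, _h3, _h4, _h5, _h6, _h7, _h8⟩ := hcond
  have huniq : ∀ J ∈ Δ, ∀ J' ∈ Δ, ∀ t : ℝ, t ∈ J → t ∈ J' → J = J' := by
    intro J hJ J' hJ' t ht ht'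
    by_contra hne
    exact (Set.disjoint_left.mp (hdisj hJ hJ' hne) ht) ht'
  have hpsi : ∀ J ∈ Δ, ∀ t ∈ J, psiF Δ F t = F J := by
    intro J hJ t ht
    have h : ∃ K ∈ Δ, t ∈ K := ⟨J, hJ, ht⟩
    simp only [psiF, dif_pos h]
    obtain ⟨hK, htK⟩ := h.choose_spec
    rw [huniq _ hK _ hJ t htK ht]
  have htri : ∀ J ∈ Δ, ∀ J' ∈ Δ, J ≠ J' → IntLT J J' ∨ IntLT J' J := by
    intro J hJ J' hJ' hne
    obtain ⟨a, b, _, hab, _, rfl⟩ := hint J hJ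
    obtain ⟨a', b', _, hab', _, rfl⟩ := hint J' hJ'
    have hdj := hdisj hJ hJ' hne
    have h : b < a' ∨ b' < a := by
      by_contra hc
      push_neg at hc
      exact Set.disjoint_left.mp hdj
        (⟨le_max_left a a', max_le hab.le hc.1⟩ : max a a' ∈ Set.Icc a b)
        ⟨le_max_right a a', max_le hc.2 hab'.le⟩
    rcases h with h | h
    · exact Or.inl fun x hx y hy => lt_of_le_of_lt hx.2 (lt_of_lt_of_le h hy.1)
    · exact Or.inr fun x hx y hy => lt_of_le_of_lt hx.2 (lt_of_lt_of_le h hy.1)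
  have hDsub : ⋃₀ Δ ⊆ Set.Icc (0:ℝ) 1 := by
    rintro t ⟨J, hJ, htJ⟩
    obtain ⟨a, b, ha, hab, hb, rfl⟩ := hint J hJ
    exact ⟨ha.trans htJ.1, htJ.2.trans hb⟩
  have hmono : MonotoneOn (psiF Δ F) (⋃₀ Δ) := by
    rintro t ⟨J, hJ, htJ⟩ s ⟨J', hJ', hsJ'⟩ hts
    rw [hpsi J hJ t htJ, hpsi J' hJ' s hsJ']
    by_cases h : J = J'
    · subst h; exact le_refl _
    rcases htri J hJ J' hJ' h with hlt | hlt
    · exact ((hFord J hJ J' hJ').mp hlt).le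
    · exact absurd (hlt s hsJ' t htJ) (not_lt.mpr hts)
  refine ⟨psiF Δ F, hpsi, hmono, ?_⟩
  intro t₀ ht₀
  rw [Metric.continuousWithinAt_iff]
  intro ε hε
  obtain ⟨J, hJ, ht₀J⟩ := ht₀
  obtain ⟨a, b, ha0, hab, hb1, rfl⟩ := hint J hJ
  have ht₀D : t₀ ∈ ⋃₀ Δ := ⟨Set.Icc a b, hJ, ht₀J⟩
  have hψt₀ : psiF Δ F t₀ = F (Set.Icc a b) := hpsi _ hJ _ ht₀J
  -- RIGHT side claim
  have hright : ∃ δ > 0, ∀ s ∈ ⋃₀ Δ, b < s → s < b + δ →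
      psiF Δ F s < F (Set.Icc a b) + ε := by
    by_cases hb' : 1 ≤ b
    · exact ⟨1, one_pos, fun s hs hbs _ =>
        absurd hbs (not_lt.mpr ((hDsub hs).2.trans hb'))⟩
    push_neg at hb'
    set S : Set ℝ := {x | ∃ J' ∈ Δ, IntLT (Set.Icc a b) J' ∧ x = sInf J'} with hSdef
    have hSgt : ∀ x ∈ S, b < x := by
      rintro x ⟨J', hJ', hLT, rfl⟩
      obtain ⟨a', b', _, hab', _, rfl⟩ := hint J' hJ'
      rw [csInf_Icc hab'.le]
      exact hLT b ⟨hab.le, le_refl b⟩ a' ⟨le_refl a', hab'.le⟩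
    have hSbdd : BddBelow S := ⟨b, fun x hx => (hSgt x hx).le⟩
    have key : ∀ s ∈ ⋃₀ Δ, b < s → ∃ J'' ∈ Δ, IntLT (Set.Icc a b) J'' ∧ s ∈ J'' := by
      rintro s ⟨J'', hJ'', hsJ''⟩ hbs
      refine ⟨J'', hJ'', ?_, hsJ''⟩
      have hne : Set.Icc a b ≠ J'' := by
        rintro rfl; exact absurd hsJ''.2 (not_le.mpr hbs)
      rcases htri _ hJ _ hJ'' hne with h | h
      · exact h
      · exact absurd (h s hsJ'' b ⟨hab.le, le_refl b⟩) (not_lt.mpr hbs.le)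
    have hmge : b ≤ sInf1 S := by
      unfold sInf1
      split_ifs with hne
      · exact le_csInf hne fun x hx => (hSgt x hx).le
      · exact hb'.le
    rcases eq_or_lt_of_le hmge with heq | hlt
    · -- boundary touched: use condition (2)
      have hSne : S.Nonempty := by
        by_contra hSe
        rw [Set.not_nonempty_iff_eq_empty] at hSe
        have h1' : sInf1 S = 1 := by unfold sInf1; rw [hSe]; simp
        exact absurd (heq.trans h1') (ne_of_lt hb')
      have hFeq : F (Set.Icc a b) =
          sInf1 {x | ∃ J' ∈ Δ, IntLT (Set.Icc a b) J' ∧ x = F J'} := by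
        apply h2 _ hJ
        rw [csSup_Icc hab.le]
        exact heq
      set T : Set ℝ := {x | ∃ J' ∈ Δ, IntLT (Set.Icc a b) J' ∧ x = F J'} with hTdef
      have hTne : T.Nonempty := by
        obtain ⟨x, J', hJ', hLT, _⟩ := hSne
        exact ⟨F J', J', hJ', hLT, rfl⟩
      have hFinf : F (Set.Icc a b) = sInf T := by
        rw [hFeq]; unfold sInf1; rw [if_pos hTne]
      have hlt' : sInf T < F (Set.Icc a b) + ε := by rw [← hFinf]; linarith
      obtain ⟨x, hxT, hxlt⟩ := exists_lt_of_csInf_lt hTne hlt'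
      obtain ⟨J', hJ', hLT, rfl⟩ := hxT
      obtain ⟨a', b', _, hab', _, rfl⟩ := hint J' hJ'
      have hba' : b < a' := hLT b ⟨hab.le, le_refl b⟩ a' ⟨le_refl a', hab'.le⟩
      refine ⟨a' - b, by linarith, fun s hs hbs hslt => ?_⟩
      have hsa' : s ≤ a' := by linarith
      have ha'D : a' ∈ ⋃₀ Δ := ⟨Set.Icc a' b', hJ', le_refl a', hab'.le⟩
      have hm := hmono hs ha'D hsa'
      rw [hpsi _ hJ' a' ⟨le_refl a', hab'.le⟩] at hm
      exact lt_of_le_of_lt hm hxlt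
    · -- gap on the right
      refine ⟨sInf1 S - b, by linarith, fun s hs hbs hslt => ?_⟩
      exfalso
      obtain ⟨J'', hJ'', hLT, hsJ''⟩ := key s hs hbs
      have hmem : sInf J'' ∈ S := ⟨J'', hJ'', hLT, rfl⟩
      have hSne : S.Nonempty := ⟨_, hmem⟩
      have h1' : sInf1 S ≤ sInf J'' := by
        unfold sInf1; rw [if_pos hSne]; exact csInf_le hSbdd hmem
      obtain ⟨a'', b'', _, hab'', _, rfl⟩ := hint J'' hJ''
      rw [csInf_Icc hab''.le] at h1'
      have := hsJ''.1
      linarith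
  -- LEFT side claim
  have hleft : ∃ δ > 0, ∀ s ∈ ⋃₀ Δ, s < a → a - δ < s →
      F (Set.Icc a b) - ε < psiF Δ F s := by
    by_cases ha' : a ≤ 0
    · exact ⟨1, one_pos, fun s hs hsa _ =>
        absurd hsa (not_lt.mpr (ha'.trans (hDsub hs).1))⟩
    push_neg at ha'
    set S : Set ℝ := {x | ∃ J' ∈ Δ, IntLT J' (Set.Icc a b) ∧ x = sSup J'} with hSdef
    have hSlt : ∀ x ∈ S, x < a := by
      rintro x ⟨J', hJ', hLT, rfl⟩
      obtain ⟨a', b', _, hab', _, rfl⟩ := hint J' hJ'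
      rw [csSup_Icc hab'.le]
      exact hLT b' ⟨hab'.le, le_refl b'⟩ a ⟨le_refl a, hab.le⟩
    have hSbdd : BddAbove S := ⟨a, fun x hx => (hSlt x hx).le⟩
    have key : ∀ s ∈ ⋃₀ Δ, s < a → ∃ J'' ∈ Δ, IntLT J'' (Set.Icc a b) ∧ s ∈ J'' := by
      rintro s ⟨J'', hJ'', hsJ''⟩ hsa
      refine ⟨J'', hJ'', ?_, hsJ''⟩
      have hne : J'' ≠ Set.Icc a b := by
        rintro rfl; exact absurd hsJ''.1 (not_le.mpr hsa)
      rcases htri _ hJ'' _ hJ hne with h | h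
      · exact h
      · exact absurd (h a ⟨le_refl a, hab.le⟩ s hsJ'') (not_lt.mpr hsa.le)
    have hmle : sSup0 S ≤ a := by
      unfold sSup0
      split_ifs with hne
      · exact csSup_le hne fun x hx => (hSlt x hx).le
      · exact ha'.le
    rcases eq_or_lt_of_le hmle with heq | hlt
    · have hSne : S.Nonempty := by
        by_contra hSe
        rw [Set.not_nonempty_iff_eq_empty] at hSe
        have h0' : sSup0 S = 0 := by unfold sSup0; rw [hSe]; simp
        exact absurd (h0'.symm.trans heq) (ne_of_lt ha')
      have hFeq : F (Set.Icc a b) =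
          sSup0 {x | ∃ J' ∈ Δ, IntLT J' (Set.Icc a b) ∧ x = F J'} := by
        apply h1 _ hJ
        rw [csInf_Icc hab.le]
        exact heq.symm
      set T : Set ℝ := {x | ∃ J' ∈ Δ, IntLT J' (Set.Icc a b) ∧ x = F J'} with hTdef
      have hTne : T.Nonempty := by
        obtain ⟨x, J', hJ', hLT, _⟩ := hSne
        exact ⟨F J', J', hJ', hLT, rfl⟩
      have hFsup : F (Set.Icc a b) = sSup T := by
        rw [hFeq]; unfold sSup0; rw [if_pos hTne]
      have hlt' : F (Set.Icc a b) - ε < sSup T := by rw [← hFsup]; linarith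
      obtain ⟨x, hxT, hxlt⟩ := exists_lt_of_lt_csSup hTne hlt'
      obtain ⟨J', hJ', hLT, rfl⟩ := hxT
      obtain ⟨a', b', _, hab', _, rfl⟩ := hint J' hJ'
      have hb'a : b' < a := hLT b' ⟨hab'.le, le_refl b'⟩ a ⟨le_refl a, hab.le⟩
      refine ⟨a - b', by linarith, fun s hs hsa hslt => ?_⟩
      have hb's : b' ≤ s := by linarith
      have hb'D : b' ∈ ⋃₀ Δ := ⟨Set.Icc a' b', hJ', hab'.le, le_refl b'⟩
      have hm := hmono hb'D hs hb's
      rw [hpsi _ hJ' b' ⟨hab'.le, le_refl b'⟩] at hm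
      exact lt_of_lt_of_le hxlt hm
    · refine ⟨a - sSup0 S, by linarith, fun s hs hsa hslt => ?_⟩
      exfalso
      obtain ⟨J'', hJ'', hLT, hsJ''⟩ := key s hs hsa
      have hmem : sSup J'' ∈ S := ⟨J'', hJ'', hLT, rfl⟩
      have hSne : S.Nonempty := ⟨_, hmem⟩
      have h1' : sSup J'' ≤ sSup0 S := by
        unfold sSup0; rw [if_pos hSne]; exact le_csSup hSbdd hmem
      obtain ⟨a'', b'', _, hab'', _, rfl⟩ := hint J'' hJ''
      rw [csSup_Icc hab''.le] at h1'
      have := hsJ''.2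
      linarith
  obtain ⟨δR, hδR, hR⟩ := hright
  obtain ⟨δL, hδL, hL⟩ := hleft
  refine ⟨min (δR + (b - t₀)) (δL + (t₀ - a)),
    lt_min (by linarith [ht₀J.2]) (by linarith [ht₀J.1]), ?_⟩
  intro s hs hdist
  have habs := abs_lt.mp (by rwa [Real.dist_eq] at hdist)
  have hminR : min (δR + (b - t₀)) (δL + (t₀ - a)) ≤ δR + (b - t₀) := min_le_left _ _
  have hminL : min (δR + (b - t₀)) (δL + (t₀ - a)) ≤ δL + (t₀ - a) := min_le_right _ _
  rcases le_or_gt s t₀ with hst | hst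
  · have hub : psiF Δ F s ≤ F (Set.Icc a b) := by
      have hm := hmono hs ht₀D hst
      rwa [hψt₀] at hm
    rcases le_or_gt a s with has | has
    · have he : psiF Δ F s = F (Set.Icc a b) := hpsi _ hJ s ⟨has, hst.trans ht₀J.2⟩
      rw [hψt₀, he]
      simpa [Real.dist_eq] using hε
    · have hlb : F (Set.Icc a b) - ε < psiF Δ F s := by
        refine hL s hs has ?_
        have h1' := habs.1
        linarith
      rw [hψt₀, Real.dist_eq, abs_lt]
      constructor <;> linarith
  · have hlb : F (Set.Icc a b) ≤ psiF Δ F s := by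
      have hm := hmono ht₀D hs hst.le
      rwa [hψt₀] at hm
    rcases le_or_gt s b with hsb | hsb
    · have he : psiF Δ F s = F (Set.Icc a b) := hpsi _ hJ s ⟨ht₀J.1.trans hst.le, hsb⟩
      rw [hψt₀, he]
      simpa [Real.dist_eq] using hε
    · have hub : psiF Δ F s < F (Set.Icc a b) + ε := by
        refine hR s hs hsb ?_
        have h2' := habs.2
        linarith
      rw [hψt₀, Real.dist_eq, abs_lt]
      constructor <;> linarith
end

section
/- Let Δ be a set of pairwise disjoint non-degenerate closed subintervals of [0,1], C ⊆ [0,1], and F : Δ → C an order-preserving bijection. There exists a reparametrization φ of [0,1] whose set of stop intervals equals Δ and whose stop map equals F if and only if conditions (1)–(8) hold. -/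
open Set Classical

/-!
Write `s(t)` and `i(t)` for the supremum of the right ends of the intervals of `Δ` lying left of
`t` and the infimum of the left ends of those lying right of `t`, and `L(t)`, `R(t)` for the
corresponding supremum and infimum of the values of `F`.

Necessity: by monotonicity and continuity, `φ t = L(t)` whenever `s(t) = t` and
`φ t = R(t)` whenever `i(t) = t`; this gives (1), (2), (3), (5), (7). A point outside every stop
interval does not lie on a flat piece of `φ`, so `φ (s(t)) < φ (i(t))` across a gap, which gives
(4), (6), (8).

Sufficiency: put `φ = F J` on each `J ∈ Δ` and, at any other `t`, interpolate linearly between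
`(s(t), L(t))` and `(i(t), R(t))`. Conditions (4), (6), (8) make `φ` strictly increasing except
inside a single `J`, so its stop intervals are exactly the `J ∈ Δ`, and (1), (2), (3), (5), (7)
make `φ` map `[0,1]` onto `[0,1]`. A monotone surjection of `[0,1]` onto itself is continuous.
-/

noncomputable def supOver (Δ : Set (Set ℝ)) (P : Set ℝ → Prop) (g : Set ℝ → ℝ) : ℝ :=
  sSup0 {x | ∃ J ∈ Δ, P J ∧ x = g J}

noncomputable def infOver (Δ : Set (Set ℝ)) (P : Set ℝ → Prop) (g : Set ℝ → ℝ) : ℝ :=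
  sInf1 {x | ∃ J ∈ Δ, P J ∧ x = g J}

section SupOver

variable {Δ : Set (Set ℝ)} {P Q : Set ℝ → Prop} {g g' : Set ℝ → ℝ} {J : Set ℝ} {c : ℝ}

theorem supOver_congr (h : ∀ J ∈ Δ, P J ↔ Q J) : supOver Δ P g = supOver Δ Q g := by
  unfold supOver
  congr 1
  ext x
  exact ⟨fun ⟨J, hJ, hP, hx⟩ => ⟨J, hJ, (h J hJ).1 hP, hx⟩,
    fun ⟨J, hJ, hQ, hx⟩ => ⟨J, hJ, (h J hJ).2 hQ, hx⟩⟩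

theorem infOver_congr (h : ∀ J ∈ Δ, P J ↔ Q J) : infOver Δ P g = infOver Δ Q g := by
  unfold infOver
  congr 1
  ext x
  exact ⟨fun ⟨J, hJ, hP, hx⟩ => ⟨J, hJ, (h J hJ).1 hP, hx⟩,
    fun ⟨J, hJ, hQ, hx⟩ => ⟨J, hJ, (h J hJ).2 hQ, hx⟩⟩

theorem supOver_of_forall (h : ∀ J ∈ Δ, P J) :
    supOver Δ P g = sSup0 {x | ∃ J ∈ Δ, x = g J} := by
  unfold supOver
  congr 1
  ext x
  exact ⟨fun ⟨J, hJ, _, hx⟩ => ⟨J, hJ, hx⟩, fun ⟨J, hJ, hx⟩ => ⟨J, hJ, h J hJ, hx⟩⟩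

theorem infOver_of_forall (h : ∀ J ∈ Δ, P J) :
    infOver Δ P g = sInf1 {x | ∃ J ∈ Δ, x = g J} := by
  unfold infOver
  congr 1
  ext x
  exact ⟨fun ⟨J, hJ, _, hx⟩ => ⟨J, hJ, hx⟩, fun ⟨J, hJ, hx⟩ => ⟨J, hJ, h J hJ, hx⟩⟩

theorem supOver_eq_zero (h : ∀ J ∈ Δ, ¬P J) : supOver Δ P g = 0 := by
  rw [supOver, sSup0, if_neg]
  rintro ⟨x, J, hJ, hP, -⟩
  exact h J hJ hP

theorem infOver_eq_one (h : ∀ J ∈ Δ, ¬P J) : infOver Δ P g = 1 := by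
  rw [infOver, sInf1, if_neg]
  rintro ⟨x, J, hJ, hP, -⟩
  exact h J hJ hP

theorem le_supOver (hg : ∀ J ∈ Δ, g J ≤ 1) (hJ : J ∈ Δ) (hP : P J) : g J ≤ supOver Δ P g := by
  have hmem : g J ∈ {x | ∃ J ∈ Δ, P J ∧ x = g J} := ⟨J, hJ, hP, rfl⟩
  rw [supOver, sSup0, if_pos ⟨_, hmem⟩]
  exact le_csSup ⟨1, by rintro x ⟨J, hJ, -, rfl⟩; exact hg J hJ⟩ hmem

theorem infOver_le (hg : ∀ J ∈ Δ, 0 ≤ g J) (hJ : J ∈ Δ) (hP : P J) : infOver Δ P g ≤ g J := by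
  have hmem : g J ∈ {x | ∃ J ∈ Δ, P J ∧ x = g J} := ⟨J, hJ, hP, rfl⟩
  rw [infOver, sInf1, if_pos ⟨_, hmem⟩]
  exact csInf_le ⟨0, by rintro x ⟨J, hJ, -, rfl⟩; exact hg J hJ⟩ hmem

theorem supOver_le (hc : 0 ≤ c) (h : ∀ J ∈ Δ, P J → g J ≤ c) : supOver Δ P g ≤ c := by
  rw [supOver, sSup0]
  split_ifs with hne
  · exact csSup_le hne (by rintro x ⟨J, hJ, hP, rfl⟩; exact h J hJ hP)
  · exact hc

theorem le_infOver (hc : c ≤ 1) (h : ∀ J ∈ Δ, P J → c ≤ g J) : c ≤ infOver Δ P g := by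
  rw [infOver, sInf1]
  split_ifs with hne
  · exact le_csInf hne (by rintro x ⟨J, hJ, hP, rfl⟩; exact h J hJ hP)
  · exact hc

theorem exists_lt_of_lt_supOver (hc : 0 ≤ c) (h : c < supOver Δ P g) :
    ∃ J ∈ Δ, P J ∧ c < g J := by
  by_contra! h'
  exact (supOver_le hc h').not_gt h

theorem exists_lt_of_infOver_lt (hc : c ≤ 1) (h : infOver Δ P g < c) :
    ∃ J ∈ Δ, P J ∧ g J < c := by
  by_contra! h'
  exact (le_infOver hc h').not_gt h

theorem supOver_mem_Icc (hg : MapsTo g Δ (Icc 0 1)) : supOver Δ P g ∈ Icc 0 1 := by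
  refine ⟨?_, supOver_le zero_le_one fun J hJ _ => (hg hJ).2⟩
  by_cases h : ∃ J ∈ Δ, P J
  · obtain ⟨J, hJ, hP⟩ := h
    exact (hg hJ).1.trans (le_supOver (fun J hJ => (hg hJ).2) hJ hP)
  · exact (supOver_eq_zero fun J hJ hP => h ⟨J, hJ, hP⟩).ge

theorem infOver_mem_Icc (hg : MapsTo g Δ (Icc 0 1)) : infOver Δ P g ∈ Icc 0 1 := by
  refine ⟨le_infOver zero_le_one fun J hJ _ => (hg hJ).1, ?_⟩
  by_cases h : ∃ J ∈ Δ, P J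
  · obtain ⟨J, hJ, hP⟩ := h
    exact (infOver_le (fun J hJ => (hg hJ).1) hJ hP).trans (hg hJ).2
  · exact (infOver_eq_one fun J hJ hP => h ⟨J, hJ, hP⟩).le

theorem supOver_le_infOver (hg : MapsTo g Δ (Icc 0 1)) (hg' : MapsTo g' Δ (Icc 0 1))
    (h : ∀ J ∈ Δ, P J → ∀ J' ∈ Δ, Q J' → g J ≤ g' J') : supOver Δ P g ≤ infOver Δ Q g' :=
  supOver_le (infOver_mem_Icc hg').1 fun J hJ hP =>
    le_infOver (hg hJ).2 fun J' hJ' hQ => h J hJ hP J' hJ' hQ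

theorem supOver_mem_closure (hg : ∀ J ∈ Δ, g J ≤ 1) (h : ∃ J ∈ Δ, P J) :
    supOver Δ P g ∈ closure {x | ∃ J ∈ Δ, P J ∧ x = g J} := by
  obtain ⟨J, hJ, hP⟩ := h
  have hne : {x | ∃ J ∈ Δ, P J ∧ x = g J}.Nonempty := ⟨_, J, hJ, hP, rfl⟩
  rw [supOver, sSup0, if_pos hne]
  exact csSup_mem_closure hne ⟨1, by rintro x ⟨J, hJ, -, rfl⟩; exact hg J hJ⟩

theorem infOver_mem_closure (hg : ∀ J ∈ Δ, 0 ≤ g J) (h : ∃ J ∈ Δ, P J) :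
    infOver Δ P g ∈ closure {x | ∃ J ∈ Δ, P J ∧ x = g J} := by
  obtain ⟨J, hJ, hP⟩ := h
  have hne : {x | ∃ J ∈ Δ, P J ∧ x = g J}.Nonempty := ⟨_, J, hJ, hP, rfl⟩
  rw [infOver, sInf1, if_pos hne]
  exact csInf_mem_closure hne ⟨0, by rintro x ⟨J, hJ, -, rfl⟩; exact hg J hJ⟩

end SupOver

def IsIntervalFamily (Δ : Set (Set ℝ)) : Prop :=
  ∀ J ∈ Δ, ∃ a b : ℝ, 0 ≤ a ∧ a < b ∧ b ≤ 1 ∧ J = Icc a b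

def OrderPreserving (Δ : Set (Set ℝ)) (F : Set ℝ → ℝ) : Prop :=
  ∀ J ∈ Δ, ∀ J' ∈ Δ, (IntLT J J' ↔ F J < F J')

namespace IsIntervalFamily

variable {Δ : Set (Set ℝ)} {J J' : Set ℝ} {t : ℝ}

theorem sInf_lt_sSup (hΔ : IsIntervalFamily Δ) (hJ : J ∈ Δ) : sInf J < sSup J := by
  obtain ⟨a, b, -, hab, -, rfl⟩ := hΔ J hJ
  rwa [csInf_Icc hab.le, csSup_Icc hab.le]

theorem sInf_nonneg (hΔ : IsIntervalFamily Δ) (hJ : J ∈ Δ) : 0 ≤ sInf J := by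
  obtain ⟨a, b, ha, hab, -, rfl⟩ := hΔ J hJ
  rwa [csInf_Icc hab.le]

theorem sSup_le_one (hΔ : IsIntervalFamily Δ) (hJ : J ∈ Δ) : sSup J ≤ 1 := by
  obtain ⟨a, b, -, hab, hb, rfl⟩ := hΔ J hJ
  rwa [csSup_Icc hab.le]

theorem mem_iff (hΔ : IsIntervalFamily Δ) (hJ : J ∈ Δ) : t ∈ J ↔ sInf J ≤ t ∧ t ≤ sSup J := by
  obtain ⟨a, b, -, hab, -, rfl⟩ := hΔ J hJ
  rw [csInf_Icc hab.le, csSup_Icc hab.le, mem_Icc]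

theorem sInf_mem (hΔ : IsIntervalFamily Δ) (hJ : J ∈ Δ) : sInf J ∈ J :=
  (hΔ.mem_iff hJ).2 ⟨le_rfl, (hΔ.sInf_lt_sSup hJ).le⟩

theorem sSup_mem (hΔ : IsIntervalFamily Δ) (hJ : J ∈ Δ) : sSup J ∈ J :=
  (hΔ.mem_iff hJ).2 ⟨(hΔ.sInf_lt_sSup hJ).le, le_rfl⟩

theorem subset_Icc (hΔ : IsIntervalFamily Δ) (hJ : J ∈ Δ) : J ⊆ Icc 0 1 := fun _ ht =>
  ⟨(hΔ.sInf_nonneg hJ).trans ((hΔ.mem_iff hJ).1 ht).1,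
    ((hΔ.mem_iff hJ).1 ht).2.trans (hΔ.sSup_le_one hJ)⟩

theorem mapsTo_sInf (hΔ : IsIntervalFamily Δ) : MapsTo sInf Δ (Icc 0 1) := fun _ hJ =>
  hΔ.subset_Icc hJ (hΔ.sInf_mem hJ)

theorem mapsTo_sSup (hΔ : IsIntervalFamily Δ) : MapsTo sSup Δ (Icc 0 1) := fun _ hJ =>
  hΔ.subset_Icc hJ (hΔ.sSup_mem hJ)

theorem intLT_iff (hΔ : IsIntervalFamily Δ) (hJ : J ∈ Δ) (hJ' : J' ∈ Δ) :
    IntLT J J' ↔ sSup J < sInf J' :=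
  ⟨fun h => h _ (hΔ.sSup_mem hJ) _ (hΔ.sInf_mem hJ'), fun h _ hx _ hy =>
    ((hΔ.mem_iff hJ).1 hx).2.trans_lt (h.trans_le ((hΔ.mem_iff hJ').1 hy).1)⟩

theorem lt_or_lt_of_notMem (hΔ : IsIntervalFamily Δ) (hJ : J ∈ Δ) (ht : t ∉ J) :
    t < sInf J ∨ sSup J < t := by
  rw [hΔ.mem_iff hJ, not_and_or, not_le, not_le] at ht
  exact ht

theorem intLT_or_intLT (hΔ : IsIntervalFamily Δ) (hdisj : Δ.Pairwise Disjoint) (hJ : J ∈ Δ)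
    (hJ' : J' ∈ Δ) (hne : J ≠ J') : IntLT J J' ∨ IntLT J' J := by
  by_contra! h
  rw [hΔ.intLT_iff hJ hJ', hΔ.intLT_iff hJ' hJ, not_lt, not_lt] at h
  have hm : max (sInf J) (sInf J') ∈ J :=
    (hΔ.mem_iff hJ).2 ⟨le_max_left _ _, max_le (hΔ.sInf_lt_sSup hJ).le h.1⟩
  have hm' : max (sInf J) (sInf J') ∈ J' :=
    (hΔ.mem_iff hJ').2 ⟨le_max_right _ _, max_le h.2 (hΔ.sInf_lt_sSup hJ').le⟩
  exact disjoint_left.1 (hdisj hJ hJ' hne) hm hm'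

theorem intLT_of_sSup_lt (hΔ : IsIntervalFamily Δ) (hdisj : Δ.Pairwise Disjoint) (hJ : J ∈ Δ)
    (hJ' : J' ∈ Δ) (h : sSup J < sSup J') : IntLT J J' := by
  refine (hΔ.intLT_or_intLT hdisj hJ hJ' (by rintro rfl; exact h.false)).resolve_right fun h' => ?_
  linarith [(hΔ.intLT_iff hJ' hJ).1 h', hΔ.sInf_lt_sSup hJ]

theorem intLT_of_sInf_lt (hΔ : IsIntervalFamily Δ) (hdisj : Δ.Pairwise Disjoint) (hJ : J ∈ Δ)
    (hJ' : J' ∈ Δ) (h : sInf J < sInf J') : IntLT J J' := by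
  refine (hΔ.intLT_or_intLT hdisj hJ hJ' (by rintro rfl; exact h.false)).resolve_right fun h' => ?_
  linarith [(hΔ.intLT_iff hJ' hJ).1 h', hΔ.sInf_lt_sSup hJ']

end IsIntervalFamily

/-- `supLeft Δ sSup t`, `infRight Δ sInf t`, `supLeft Δ F t`, `infRight Δ F t` are the
`s(t)`, `i(t)`, `L(t)`, `R(t)` above. -/
noncomputable def supLeft (Δ : Set (Set ℝ)) (g : Set ℝ → ℝ) (t : ℝ) : ℝ :=
  supOver Δ (fun J => sSup J < t) g

noncomputable def infRight (Δ : Set (Set ℝ)) (g : Set ℝ → ℝ) (t : ℝ) : ℝ :=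
  infOver Δ (fun J => t < sInf J) g

section Gaps

variable {Δ : Set (Set ℝ)} {F g : Set ℝ → ℝ} {J : Set ℝ} {t : ℝ}

theorem supLeft_sSup_le (ht : 0 ≤ t) : supLeft Δ sSup t ≤ t :=
  supOver_le ht fun _ _ h => h.le

theorem le_infRight_sInf (ht : t ≤ 1) : t ≤ infRight Δ sInf t :=
  le_infOver ht fun _ _ h => h.le

theorem le_supLeft (hg : ∀ J ∈ Δ, g J ≤ 1) (hJ : J ∈ Δ) (h : sSup J < t) :
    g J ≤ supLeft Δ g t :=
  le_supOver hg hJ h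

theorem infRight_le (hg : ∀ J ∈ Δ, 0 ≤ g J) (hJ : J ∈ Δ) (h : t < sInf J) :
    infRight Δ g t ≤ g J :=
  infOver_le hg hJ h

theorem supLeft_zero (hΔ : IsIntervalFamily Δ) : supLeft Δ g 0 = 0 :=
  supOver_eq_zero fun _ hJ h => (hΔ.sInf_nonneg hJ).not_gt ((hΔ.sInf_lt_sSup hJ).trans h)

theorem infRight_one (hΔ : IsIntervalFamily Δ) : infRight Δ g 1 = 1 :=
  infOver_eq_one fun _ hJ h => (hΔ.sSup_le_one hJ).not_gt (h.trans (hΔ.sInf_lt_sSup hJ))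

theorem infRight_zero (hΔ : IsIntervalFamily Δ) (h0 : ∀ J ∈ Δ, (0 : ℝ) ∉ J) :
    infRight Δ g 0 = sInf1 {x | ∃ J ∈ Δ, x = g J} :=
  infOver_of_forall fun J hJ =>
    (hΔ.sInf_nonneg hJ).lt_of_ne fun he => h0 J hJ (he ▸ hΔ.sInf_mem hJ)

theorem supLeft_one (hΔ : IsIntervalFamily Δ) (h1 : ∀ J ∈ Δ, (1 : ℝ) ∉ J) :
    supLeft Δ g 1 = sSup0 {x | ∃ J ∈ Δ, x = g J} :=
  supOver_of_forall fun J hJ =>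
    (hΔ.sSup_le_one hJ).lt_of_ne fun he => h1 J hJ (he ▸ hΔ.sSup_mem hJ)

theorem supOver_intLT (hΔ : IsIntervalFamily Δ) (hJ : J ∈ Δ) :
    supOver Δ (IntLT · J) g = supLeft Δ g (sInf J) :=
  supOver_congr fun _ hJ' => hΔ.intLT_iff hJ' hJ

theorem infOver_intLT (hΔ : IsIntervalFamily Δ) (hJ : J ∈ Δ) :
    infOver Δ (IntLT J ·) g = infRight Δ g (sSup J) :=
  infOver_congr fun _ hJ' => hΔ.intLT_iff hJ hJ'

theorem supLeft_le_infRight (hΔ : IsIntervalFamily Δ) (hF : MapsTo F Δ (Icc 0 1))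
    (hord : OrderPreserving Δ F) (t : ℝ) : supLeft Δ F t ≤ infRight Δ F t :=
  supOver_le_infOver hF hF fun J hJ h J' hJ' h' =>
    ((hord J hJ J' hJ').1 ((hΔ.intLT_iff hJ hJ').2 (h.trans h'))).le

end Gaps

section Necessity

variable {Δ : Set (Set ℝ)} {F : Set ℝ → ℝ} {φ : ℝ → ℝ} {K s : Set ℝ} {t c : ℝ}

theorem apply_le_of_mem_closure (hK : IsClosed K) (hφ : ContinuousOn φ K) (hs : s ⊆ K)
    (ht : t ∈ closure s) (h : ∀ x ∈ s, φ x ≤ c) : φ t ≤ c :=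
  ContinuousWithinAt.closure_le ht ((hφ t (closure_minimal hs hK ht)).mono hs)
    continuousWithinAt_const h

theorem le_apply_of_mem_closure (hK : IsClosed K) (hφ : ContinuousOn φ K) (hs : s ⊆ K)
    (ht : t ∈ closure s) (h : ∀ x ∈ s, c ≤ φ x) : c ≤ φ t :=
  ContinuousWithinAt.closure_le ht continuousWithinAt_const
    ((hφ t (closure_minimal hs hK ht)).mono hs) h

theorem apply_eq_supLeft (hΔ : IsIntervalFamily Δ) (hF : MapsTo F Δ (Icc 0 1))
    (hφ : Reparam φ) (hval : ∀ J ∈ Δ, ∀ t ∈ J, φ t = F J) (ht : t ∈ Icc 0 1)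
    (h : supLeft Δ sSup t = t) : φ t = supLeft Δ F t := by
  obtain ⟨hcont, hmono, -, h0, -⟩ := hφ
  have hφJ : ∀ J ∈ Δ, φ (sSup J) = F J := fun J hJ => hval J hJ _ (hΔ.sSup_mem hJ)
  by_cases hex : ∃ J ∈ Δ, sSup J < t
  · have hmem : supLeft Δ sSup t ∈ closure {x | ∃ J ∈ Δ, sSup J < t ∧ x = sSup J} :=
      supOver_mem_closure (fun J hJ => hΔ.sSup_le_one hJ) hex
    rw [h] at hmem
    refine le_antisymm (apply_le_of_mem_closure isClosed_Icc hcont ?_ hmem ?_) ?_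
    · rintro x ⟨J, hJ, -, rfl⟩
      exact hΔ.mapsTo_sSup hJ
    · rintro x ⟨J, hJ, hJt, rfl⟩
      rw [hφJ J hJ]
      exact le_supOver (fun J hJ => (hF hJ).2) hJ hJt
    · refine supOver_le (h0 ▸ hmono ⟨le_rfl, zero_le_one⟩ ht ht.1) fun J hJ hJt => ?_
      rw [← hφJ J hJ]
      exact hmono (hΔ.mapsTo_sSup hJ) ht hJt.le
  · push Not at hex
    have ht0 : t = 0 := h.symm.trans (supOver_eq_zero fun J hJ => (hex J hJ).not_gt)
    rw [ht0, h0, supLeft_zero hΔ]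

theorem apply_eq_infRight (hΔ : IsIntervalFamily Δ) (hF : MapsTo F Δ (Icc 0 1))
    (hφ : Reparam φ) (hval : ∀ J ∈ Δ, ∀ t ∈ J, φ t = F J) (ht : t ∈ Icc 0 1)
    (h : infRight Δ sInf t = t) : φ t = infRight Δ F t := by
  obtain ⟨hcont, hmono, -, -, h1⟩ := hφ
  have hφJ : ∀ J ∈ Δ, φ (sInf J) = F J := fun J hJ => hval J hJ _ (hΔ.sInf_mem hJ)
  by_cases hex : ∃ J ∈ Δ, t < sInf J
  · have hmem : infRight Δ sInf t ∈ closure {x | ∃ J ∈ Δ, t < sInf J ∧ x = sInf J} :=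
      infOver_mem_closure (fun J hJ => hΔ.sInf_nonneg hJ) hex
    rw [h] at hmem
    refine le_antisymm ?_ (le_apply_of_mem_closure isClosed_Icc hcont ?_ hmem ?_)
    · refine le_infOver (h1 ▸ hmono ht ⟨zero_le_one, le_rfl⟩ ht.2) fun J hJ hJt => ?_
      rw [← hφJ J hJ]
      exact hmono ht (hΔ.mapsTo_sInf hJ) hJt.le
    · rintro x ⟨J, hJ, -, rfl⟩
      exact hΔ.mapsTo_sInf hJ
    · rintro x ⟨J, hJ, hJt, rfl⟩
      rw [hφJ J hJ]
      exact infOver_le (fun J hJ => (hF hJ).1) hJ hJt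
  · push Not at hex
    have ht1 : t = 1 := h.symm.trans (infOver_eq_one fun J hJ => (hex J hJ).not_gt)
    rw [ht1, h1, infRight_one hΔ]

theorem apply_lt_apply_of_notMem (hmono : MonotoneOn φ (Icc 0 1))
    (hstop : ∀ K, IsStopIntervalOf φ K → K ∈ Δ) {z p q : ℝ} (hz : z ∈ Icc 0 1)
    (hzΔ : ∀ J ∈ Δ, z ∉ J) (hp : p ∈ Icc 0 1) (hq : q ∈ Icc 0 1) (hpz : p ≤ z) (hzq : z ≤ q)
    (hpq : p < q) : φ p < φ q := by
  refine (hmono hp hq hpq.le).lt_of_ne fun heq => hzΔ _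
    (hstop _ ⟨φ p, rfl, p, ⟨hp, rfl⟩, q, ⟨hq, heq.symm⟩, hpq.ne⟩) ⟨hz, ?_⟩
  exact le_antisymm (heq ▸ hmono hz hq hzq) (hmono hp hz hpz)

theorem supLeft_lt_infRight_of_reparam (hΔ : IsIntervalFamily Δ) (hφ : Reparam φ)
    (hstop : ∀ K, IsStopIntervalOf φ K → K ∈ Δ) (hval : ∀ J ∈ Δ, ∀ t ∈ J, φ t = F J)
    (ht : t ∈ Icc 0 1) (htΔ : ∀ J ∈ Δ, t ∉ J) (h : supLeft Δ sSup t < infRight Δ sInf t) :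
    supLeft Δ F t < infRight Δ F t := by
  obtain ⟨-, hmono, hmaps, -, -⟩ := hφ
  have hp : supLeft Δ sSup t ∈ Icc 0 1 := supOver_mem_Icc hΔ.mapsTo_sSup
  have hq : infRight Δ sInf t ∈ Icc 0 1 := infOver_mem_Icc hΔ.mapsTo_sInf
  calc supLeft Δ F t ≤ φ (supLeft Δ sSup t) := by
        refine supOver_le (hmaps hp).1 fun J hJ hJt => ?_
        rw [← hval J hJ _ (hΔ.sSup_mem hJ)]
        exact hmono (hΔ.mapsTo_sSup hJ) hp (le_supOver (fun J hJ => hΔ.sSup_le_one hJ) hJ hJt)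
    _ < φ (infRight Δ sInf t) := apply_lt_apply_of_notMem hmono hstop ht htΔ hp hq
        (supLeft_sSup_le ht.1) (le_infRight_sInf ht.2) h
    _ ≤ infRight Δ F t := by
        refine le_infOver (hmaps hq).2 fun J hJ hJt => ?_
        rw [← hval J hJ _ (hΔ.sInf_mem hJ)]
        exact hmono hq (hΔ.mapsTo_sInf hJ) (infOver_le (fun J hJ => hΔ.sInf_nonneg hJ) hJ hJt)

theorem sInf1_eq_zero_of_reparam (hΔ : IsIntervalFamily Δ) (hF : MapsTo F Δ (Icc 0 1))
    (hφ : Reparam φ) (hval : ∀ J ∈ Δ, ∀ t ∈ J, φ t = F J)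
    (h : sInf1 {x | ∃ J ∈ Δ, x = sInf J} = 0) : sInf1 {x | ∃ J ∈ Δ, x = F J} = 0 := by
  by_cases h0 : ∃ J ∈ Δ, (0 : ℝ) ∈ J
  · obtain ⟨J, hJ, h0J⟩ := h0
    rw [← infOver_of_forall (P := fun _ => True) fun _ _ => trivial]
    refine le_antisymm ?_ (infOver_mem_Icc hF).1
    exact (infOver_le (fun J hJ => (hF hJ).1) hJ trivial).trans_eq
      ((hval J hJ 0 h0J).symm.trans hφ.2.2.2.1)
  · push Not at h0
    rw [← infRight_zero hΔ h0] at h ⊢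
    rw [← apply_eq_infRight hΔ hF hφ hval (left_mem_Icc.2 zero_le_one) h, hφ.2.2.2.1]

theorem sSup0_eq_one_of_reparam (hΔ : IsIntervalFamily Δ) (hF : MapsTo F Δ (Icc 0 1))
    (hφ : Reparam φ) (hval : ∀ J ∈ Δ, ∀ t ∈ J, φ t = F J)
    (h : sSup0 {x | ∃ J ∈ Δ, x = sSup J} = 1) : sSup0 {x | ∃ J ∈ Δ, x = F J} = 1 := by
  by_cases h1 : ∃ J ∈ Δ, (1 : ℝ) ∈ J
  · obtain ⟨J, hJ, h1J⟩ := h1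
    rw [← supOver_of_forall (P := fun _ => True) fun _ _ => trivial]
    refine le_antisymm (supOver_mem_Icc hF).2 ?_
    exact (hφ.2.2.2.2.symm.trans (hval J hJ 1 h1J)).trans_le
      (le_supOver (fun J hJ => (hF hJ).2) hJ trivial)
  · push Not at h1
    rw [← supLeft_one hΔ h1] at h ⊢
    rw [← apply_eq_supLeft hΔ hF hφ hval (right_mem_Icc.2 zero_le_one) h, hφ.2.2.2.2]

theorem stopConditions_of_reparam (hΔ : IsIntervalFamily Δ) (hF : MapsTo F Δ (Icc 0 1))
    (hφ : Reparam φ) (hstop : ∀ K, IsStopIntervalOf φ K → K ∈ Δ)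
    (hval : ∀ J ∈ Δ, ∀ t ∈ J, φ t = F J) : StopConditions Δ F := by
  have hgap : ∀ t ∈ Icc (0 : ℝ) 1, (∀ J ∈ Δ, t ∉ J) →
      supLeft Δ sSup t < infRight Δ sInf t → supLeft Δ F t < infRight Δ F t :=
    fun t ht htΔ h => supLeft_lt_infRight_of_reparam hΔ hφ hstop hval ht htΔ h
  refine ⟨fun J hJ h => ?_, fun J hJ h => ?_, fun t ht h => ?_,
    fun t ht htΔ h => hgap t (Ioo_subset_Icc_self ht) htΔ h,
    sInf1_eq_zero_of_reparam hΔ hF hφ hval, fun h0 h => ?_,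
    sSup0_eq_one_of_reparam hΔ hF hφ hval, fun h1 h => ?_⟩
  · change sInf J = supOver Δ (IntLT · J) sSup at h
    change F J = supOver Δ (IntLT · J) F
    rw [supOver_intLT hΔ hJ] at h ⊢
    rw [← hval J hJ _ (hΔ.sInf_mem hJ)]
    exact apply_eq_supLeft hΔ hF hφ hval (hΔ.mapsTo_sInf hJ) h.symm
  · change sSup J = infOver Δ (IntLT J ·) sInf at h
    change F J = infOver Δ (IntLT J ·) F
    rw [infOver_intLT hΔ hJ] at h ⊢
    rw [← hval J hJ _ (hΔ.sSup_mem hJ)]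
    exact apply_eq_infRight hΔ hF hφ hval (hΔ.mapsTo_sSup hJ) h.symm
  · change supLeft Δ sSup t = infRight Δ sInf t at h
    change supLeft Δ F t = infRight Δ F t
    have hs : supLeft Δ sSup t ≤ t := supLeft_sSup_le ht.1.le
    have hi : t ≤ infRight Δ sInf t := le_infRight_sInf ht.2.le
    rw [← apply_eq_supLeft hΔ hF hφ hval (Ioo_subset_Icc_self ht) (by linarith),
      ← apply_eq_infRight hΔ hF hφ hval (Ioo_subset_Icc_self ht) (by linarith)]
  · rw [← infRight_zero hΔ h0] at h ⊢
    simpa only [supLeft_zero hΔ] using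
      hgap 0 (left_mem_Icc.2 zero_le_one) h0 (by rwa [supLeft_zero hΔ])
  · rw [← supLeft_one hΔ h1] at h ⊢
    simpa only [infRight_one hΔ] using
      hgap 1 (right_mem_Icc.2 zero_le_one) h1 (by rwa [infRight_one hΔ])

end Necessity

/-- The affine function through `(s, a)` and `(i, b)`; for `s = i` it is constantly `a`, as
`x / 0 = 0`. -/
noncomputable def interp (s i a b t : ℝ) : ℝ := a + (b - a) * ((t - s) / (i - s))

section Interp

variable {s i a b t t' y : ℝ}

theorem interp_left : interp s i a b s = a := by
  simp [interp]

theorem interp_right (h : s = i → a = b) : interp s i a b i = b := by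
  rcases eq_or_ne s i with rfl | hne
  · simp [interp, h rfl]
  · simp [interp, div_self (sub_ne_zero.2 hne.symm)]

theorem interp_mem_Icc (hs : s ≤ t) (hi : t ≤ i) (hab : a ≤ b) : interp s i a b t ∈ Icc a b := by
  have h0 : 0 ≤ (t - s) / (i - s) := div_nonneg (sub_nonneg.2 hs) (sub_nonneg.2 (hs.trans hi))
  have h1 : (t - s) / (i - s) ≤ 1 := div_le_one_of_le₀ (by linarith) (by linarith)
  constructor <;> unfold interp <;> nlinarith

theorem left_lt_interp (hst : s < t) (hsi : s < i) (hab : a < b) : a < interp s i a b t :=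
  lt_add_of_pos_right a (mul_pos (sub_pos.2 hab) (div_pos (sub_pos.2 hst) (sub_pos.2 hsi)))

theorem interp_lt_right (hti : t < i) (hsi : s < i) (hab : a < b) : interp s i a b t < b := by
  have : (t - s) / (i - s) < 1 := (div_lt_one (sub_pos.2 hsi)).2 (by linarith)
  unfold interp
  nlinarith

theorem interp_lt_interp (hsi : s < i) (hab : a < b) (h : t < t') :
    interp s i a b t < interp s i a b t' :=
  add_lt_add_right (mul_lt_mul_of_pos_left
    (div_lt_div_of_pos_right (sub_lt_sub_right h s) (sub_pos.2 hsi)) (sub_pos.2 hab)) a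

theorem interp_interp (hsi : s ≤ i) (hay : a ≤ y) (hyb : y ≤ b) (h : s = i → a = b) :
    interp s i a b (interp a b s i y) = y := by
  rcases hsi.eq_or_lt with rfl | hsi
  · simp only [interp, sub_self, zero_mul, add_zero, div_zero, mul_zero]
    linarith [h rfl]
  rcases (hay.trans hyb).eq_or_lt with rfl | hab
  · simp only [interp, sub_self, div_zero, mul_zero, add_zero, zero_div]
    linarith
  simp only [interp]
  field_simp
  ring

end Interp

noncomputable def stopReparam (Δ : Set (Set ℝ)) (F : Set ℝ → ℝ) (t : ℝ) : ℝ :=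
  if h : ∃ J ∈ Δ, t ∈ J then F h.choose
  else interp (supLeft Δ sSup t) (infRight Δ sInf t) (supLeft Δ F t) (infRight Δ F t) t

section Construction

variable {Δ : Set (Set ℝ)} {F : Set ℝ → ℝ} {J : Set ℝ} {t x y : ℝ}

theorem stopReparam_of_mem (hdisj : Δ.Pairwise Disjoint) (hJ : J ∈ Δ) (ht : t ∈ J) :
    stopReparam Δ F t = F J := by
  have h : ∃ J ∈ Δ, t ∈ J := ⟨J, hJ, ht⟩
  rw [stopReparam, dif_pos h,
    PairwiseDisjoint.elim_set (f := id) hdisj h.choose_spec.1 hJ t h.choose_spec.2 ht]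

theorem stopReparam_of_notMem (ht : ∀ J ∈ Δ, t ∉ J) :
    stopReparam Δ F t =
      interp (supLeft Δ sSup t) (infRight Δ sInf t) (supLeft Δ F t) (infRight Δ F t) t := by
  rw [stopReparam, dif_neg]
  rintro ⟨J, hJ, htJ⟩
  exact ht J hJ htJ

theorem stopReparam_mem_Icc_of_notMem (hΔ : IsIntervalFamily Δ) (hF : MapsTo F Δ (Icc 0 1))
    (hord : OrderPreserving Δ F) (ht : t ∈ Icc 0 1) (htΔ : ∀ J ∈ Δ, t ∉ J) :
    stopReparam Δ F t ∈ Icc (supLeft Δ F t) (infRight Δ F t) := by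
  rw [stopReparam_of_notMem htΔ]
  exact interp_mem_Icc (supLeft_sSup_le ht.1) (le_infRight_sInf ht.2)
    (supLeft_le_infRight hΔ hF hord t)

theorem stopReparam_mapsTo (hΔ : IsIntervalFamily Δ) (hdisj : Δ.Pairwise Disjoint)
    (hF : MapsTo F Δ (Icc 0 1)) (hord : OrderPreserving Δ F) :
    MapsTo (stopReparam Δ F) (Icc 0 1) (Icc 0 1) := by
  intro t ht
  by_cases h : ∃ J ∈ Δ, t ∈ J
  · obtain ⟨J, hJ, htJ⟩ := h
    rw [stopReparam_of_mem hdisj hJ htJ]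
    exact hF hJ
  · push Not at h
    have := stopReparam_mem_Icc_of_notMem hΔ hF hord ht h
    exact ⟨(supOver_mem_Icc hF).1.trans this.1, this.2.trans (infOver_mem_Icc hF).2⟩

theorem StopConditions.supLeft_eq_infRight (hc : StopConditions Δ F) (hΔ : IsIntervalFamily Δ)
    (ht : t ∈ Icc 0 1) (htΔ : ∀ J ∈ Δ, t ∉ J) (h : supLeft Δ sSup t = infRight Δ sInf t) :
    supLeft Δ F t = infRight Δ F t := by
  rcases ht.1.eq_or_lt with rfl | h0
  · simp only [supLeft_zero hΔ, infRight_zero hΔ htΔ] at h ⊢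
    exact (hc.2.2.2.2.1 h.symm).symm
  rcases ht.2.eq_or_lt with rfl | h1
  · simp only [supLeft_one hΔ htΔ, infRight_one hΔ] at h ⊢
    exact hc.2.2.2.2.2.2.1 h
  exact hc.2.2.1 t ⟨h0, h1⟩ h

theorem StopConditions.supLeft_lt_infRight (hc : StopConditions Δ F) (hΔ : IsIntervalFamily Δ)
    (ht : t ∈ Icc 0 1) (htΔ : ∀ J ∈ Δ, t ∉ J) (h : supLeft Δ sSup t < infRight Δ sInf t) :
    supLeft Δ F t < infRight Δ F t := by
  rcases ht.1.eq_or_lt with rfl | h0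
  · simp only [supLeft_zero hΔ, infRight_zero hΔ htΔ] at h ⊢
    exact hc.2.2.2.2.2.1 htΔ h
  rcases ht.2.eq_or_lt with rfl | h1
  · simp only [supLeft_one hΔ htΔ, infRight_one hΔ] at h ⊢
    exact hc.2.2.2.2.2.2.2 htΔ h
  exact hc.2.2.2.1 t ⟨h0, h1⟩ htΔ h

theorem F_lt_stopReparam (hc : StopConditions Δ F) (hΔ : IsIntervalFamily Δ)
    (hdisj : Δ.Pairwise Disjoint) (hF : MapsTo F Δ (Icc 0 1)) (hord : OrderPreserving Δ F)
    (hJ : J ∈ Δ) (ht : t ∈ Icc 0 1) (htΔ : ∀ J ∈ Δ, t ∉ J) (hJt : sSup J < t) :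
    F J < stopReparam Δ F t := by
  have hFL : F J ≤ supLeft Δ F t := le_supLeft (fun J hJ => (hF hJ).2) hJ hJt
  rcases (le_supLeft (fun J hJ => hΔ.sSup_le_one hJ) hJ hJt).lt_or_eq with hlt | heq
  · obtain ⟨J', hJ', hJ't, hJJ'⟩ := exists_lt_of_lt_supOver (hΔ.mapsTo_sSup hJ).1 hlt
    calc F J < F J' := (hord J hJ J' hJ').1 (hΔ.intLT_of_sSup_lt hdisj hJ hJ' hJJ')
      _ ≤ supLeft Δ F t := le_supOver (fun J hJ => (hF hJ).2) hJ' hJ't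
      _ ≤ stopReparam Δ F t := (stopReparam_mem_Icc_of_notMem hΔ hF hord ht htΔ).1
  · have hsi : supLeft Δ sSup t < infRight Δ sInf t :=
      heq ▸ hJt.trans_le (le_infRight_sInf ht.2)
    rw [stopReparam_of_notMem htΔ]
    exact hFL.trans_lt (left_lt_interp (heq ▸ hJt) hsi (hc.supLeft_lt_infRight hΔ ht htΔ hsi))

theorem stopReparam_lt_F (hc : StopConditions Δ F) (hΔ : IsIntervalFamily Δ)
    (hdisj : Δ.Pairwise Disjoint) (hF : MapsTo F Δ (Icc 0 1)) (hord : OrderPreserving Δ F)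
    (hJ : J ∈ Δ) (ht : t ∈ Icc 0 1) (htΔ : ∀ J ∈ Δ, t ∉ J) (htJ : t < sInf J) :
    stopReparam Δ F t < F J := by
  have hRF : infRight Δ F t ≤ F J := infRight_le (fun J hJ => (hF hJ).1) hJ htJ
  rcases (infRight_le (fun J hJ => hΔ.sInf_nonneg hJ) hJ htJ).lt_or_eq with hlt | heq
  · obtain ⟨J', hJ', htJ', hJ'J⟩ := exists_lt_of_infOver_lt (hΔ.mapsTo_sInf hJ).2 hlt
    calc stopReparam Δ F t ≤ infRight Δ F t := (stopReparam_mem_Icc_of_notMem hΔ hF hord ht htΔ).2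
      _ ≤ F J' := infOver_le (fun J hJ => (hF hJ).1) hJ' htJ'
      _ < F J := (hord J' hJ' J hJ).1 (hΔ.intLT_of_sInf_lt hdisj hJ' hJ hJ'J)
  · have hsi : supLeft Δ sSup t < infRight Δ sInf t :=
      heq ▸ (supLeft_sSup_le ht.1).trans_lt htJ
    rw [stopReparam_of_notMem htΔ]
    exact (interp_lt_right (heq ▸ htJ) hsi (hc.supLeft_lt_infRight hΔ ht htΔ hsi)).trans_le hRF

end Construction

section LevelSets

variable {Δ : Set (Set ℝ)} {F : Set ℝ → ℝ} {J K : Set ℝ} {x y : ℝ}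

theorem stopReparam_lt_of_notMem (hc : StopConditions Δ F) (hΔ : IsIntervalFamily Δ)
    (hdisj : Δ.Pairwise Disjoint) (hF : MapsTo F Δ (Icc 0 1)) (hord : OrderPreserving Δ F)
    (hx : x ∈ Icc 0 1) (hy : y ∈ Icc 0 1) (hxΔ : ∀ J ∈ Δ, x ∉ J) (hyΔ : ∀ J ∈ Δ, y ∉ J)
    (hxy : x < y) : stopReparam Δ F x < stopReparam Δ F y := by
  by_cases hbet : ∃ J ∈ Δ, x < sInf J ∧ sSup J < y
  · obtain ⟨J, hJ, hxJ, hJy⟩ := hbet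
    exact (stopReparam_lt_F hc hΔ hdisj hF hord hJ hx hxΔ hxJ).trans
      (F_lt_stopReparam hc hΔ hdisj hF hord hJ hy hyΔ hJy)
  push Not at hbet
  have hsup : ∀ J ∈ Δ, sSup J < x ↔ sSup J < y := fun J hJ =>
    ⟨fun h => h.trans hxy, fun h => ((hΔ.lt_or_lt_of_notMem hJ (hxΔ J hJ)).resolve_left
      fun h' => (hbet J hJ h').not_gt h)⟩
  have hinf : ∀ J ∈ Δ, x < sInf J ↔ y < sInf J := fun J hJ =>
    ⟨fun h => ((hΔ.lt_or_lt_of_notMem hJ (hyΔ J hJ)).resolve_right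
      fun h' => (hbet J hJ h).not_gt h'), fun h => hxy.trans h⟩
  have hsi : supLeft Δ sSup x < infRight Δ sInf x :=
    (supLeft_sSup_le hx.1).trans_lt (hxy.trans_le ((le_infRight_sInf hy.2).trans_eq
      (infOver_congr hinf).symm))
  rw [stopReparam_of_notMem hxΔ, stopReparam_of_notMem hyΔ]
  simp only [supLeft, infRight, ← supOver_congr hsup, ← infOver_congr hinf] at hsi ⊢
  exact interp_lt_interp hsi (hc.supLeft_lt_infRight hΔ hx hxΔ hsi) hxy

theorem stopReparam_lt_stopReparam (hc : StopConditions Δ F) (hΔ : IsIntervalFamily Δ)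
    (hdisj : Δ.Pairwise Disjoint) (hF : MapsTo F Δ (Icc 0 1)) (hord : OrderPreserving Δ F)
    (hx : x ∈ Icc 0 1) (hy : y ∈ Icc 0 1) (hxy : x < y) (h : ¬∃ J ∈ Δ, x ∈ J ∧ y ∈ J) :
    stopReparam Δ F x < stopReparam Δ F y := by
  by_cases hxΔ : ∃ J ∈ Δ, x ∈ J <;> by_cases hyΔ : ∃ J ∈ Δ, y ∈ J
  · obtain ⟨J, hJ, hxJ⟩ := hxΔ
    obtain ⟨J', hJ', hyJ'⟩ := hyΔ
    have hne : J ≠ J' := by rintro rfl; exact h ⟨J, hJ, hxJ, hyJ'⟩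
    rw [stopReparam_of_mem hdisj hJ hxJ, stopReparam_of_mem hdisj hJ' hyJ']
    exact (hord J hJ J' hJ').1 ((hΔ.intLT_or_intLT hdisj hJ hJ' hne).resolve_right
      fun h' => (h' y hyJ' x hxJ).not_gt hxy)
  · obtain ⟨J, hJ, hxJ⟩ := hxΔ
    push Not at hyΔ
    rw [stopReparam_of_mem hdisj hJ hxJ]
    exact F_lt_stopReparam hc hΔ hdisj hF hord hJ hy hyΔ
      ((hΔ.lt_or_lt_of_notMem hJ (hyΔ J hJ)).resolve_left
        fun h' => (h'.trans_le ((hΔ.mem_iff hJ).1 hxJ).1).not_gt hxy)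
  · obtain ⟨J, hJ, hyJ⟩ := hyΔ
    push Not at hxΔ
    rw [stopReparam_of_mem hdisj hJ hyJ]
    exact stopReparam_lt_F hc hΔ hdisj hF hord hJ hx hxΔ
      ((hΔ.lt_or_lt_of_notMem hJ (hxΔ J hJ)).resolve_right
        fun h' => (((hΔ.mem_iff hJ).1 hyJ).2.trans_lt h').not_gt hxy)
  · push Not at hxΔ hyΔ
    exact stopReparam_lt_of_notMem hc hΔ hdisj hF hord hx hy hxΔ hyΔ hxy

theorem stopReparam_monotoneOn (hc : StopConditions Δ F) (hΔ : IsIntervalFamily Δ)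
    (hdisj : Δ.Pairwise Disjoint) (hF : MapsTo F Δ (Icc 0 1)) (hord : OrderPreserving Δ F) :
    MonotoneOn (stopReparam Δ F) (Icc 0 1) := by
  intro x hx y hy hxy
  rcases hxy.eq_or_lt with rfl | hlt
  · exact le_rfl
  by_cases h : ∃ J ∈ Δ, x ∈ J ∧ y ∈ J
  · obtain ⟨J, hJ, hxJ, hyJ⟩ := h
    rw [stopReparam_of_mem hdisj hJ hxJ, stopReparam_of_mem hdisj hJ hyJ]
  · exact (stopReparam_lt_stopReparam hc hΔ hdisj hF hord hx hy hlt h).le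

theorem inter_preimage_stopReparam (hc : StopConditions Δ F) (hΔ : IsIntervalFamily Δ)
    (hdisj : Δ.Pairwise Disjoint) (hF : MapsTo F Δ (Icc 0 1)) (hord : OrderPreserving Δ F)
    (hJ : J ∈ Δ) : Icc 0 1 ∩ stopReparam Δ F ⁻¹' {F J} = J := by
  ext x
  refine ⟨fun ⟨hx, hxJ⟩ => ?_, fun hxJ => ⟨hΔ.subset_Icc hJ hxJ, stopReparam_of_mem hdisj hJ hxJ⟩⟩
  by_contra hxJ'
  have hsep : ∀ J' ∈ Δ, x ∈ J' → sInf J ∉ J' := fun J' hJ' hx' hs' =>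
    hxJ' (PairwiseDisjoint.elim_set (f := id) hdisj hJ' hJ _ hs' (hΔ.sInf_mem hJ) ▸ hx')
  have hval : stopReparam Δ F x = stopReparam Δ F (sInf J) :=
    (hxJ : stopReparam Δ F x = F J).trans (stopReparam_of_mem hdisj hJ (hΔ.sInf_mem hJ)).symm
  rcases lt_or_gt_of_ne fun he : x = sInf J => hxJ' (he ▸ hΔ.sInf_mem hJ) with h | h
  · exact (stopReparam_lt_stopReparam hc hΔ hdisj hF hord hx (hΔ.mapsTo_sInf hJ) h
      fun ⟨J', hJ', hx', hs'⟩ => hsep J' hJ' hx' hs').ne hval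
  · exact (stopReparam_lt_stopReparam hc hΔ hdisj hF hord (hΔ.mapsTo_sInf hJ) hx h
      fun ⟨J', hJ', hs', hx'⟩ => hsep J' hJ' hx' hs').ne' hval

theorem isStopIntervalOf_stopReparam_iff (hc : StopConditions Δ F) (hΔ : IsIntervalFamily Δ)
    (hdisj : Δ.Pairwise Disjoint) (hF : MapsTo F Δ (Icc 0 1)) (hord : OrderPreserving Δ F) :
    IsStopIntervalOf (stopReparam Δ F) K ↔ K ∈ Δ := by
  refine ⟨?_, fun hK => ⟨F K, inter_preimage_stopReparam hc hΔ hdisj hF hord hK,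
    sInf K, hΔ.sInf_mem hK, sSup K, hΔ.sSup_mem hK, (hΔ.sInf_lt_sSup hK).ne⟩⟩
  rintro ⟨v, rfl, x, ⟨hx, hxv⟩, y, ⟨hy, hyv⟩, hne⟩
  wlog hxy : x < y generalizing x y
  · exact this y hy hyv x hne.symm hx hxv (hne.lt_or_gt.resolve_left hxy)
  by_cases h : ∃ J ∈ Δ, x ∈ J ∧ y ∈ J
  · obtain ⟨J, hJ, hxJ, -⟩ := h
    have hv : v = F J := (hxv : stopReparam Δ F x = v).symm.trans (stopReparam_of_mem hdisj hJ hxJ)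
    rwa [hv, inter_preimage_stopReparam hc hΔ hdisj hF hord hJ]
  · exact absurd (hxv.trans hyv.symm)
      (stopReparam_lt_stopReparam hc hΔ hdisj hF hord hx hy hxy h).ne

end LevelSets

section Surjectivity

variable {Δ : Set (Set ℝ)} {F : Set ℝ → ℝ} {J : Set ℝ} {t y : ℝ}

theorem intLT_iff_of_sSup_eq_supOver (hΔ : IsIntervalFamily Δ) (hord : OrderPreserving Δ F)
    (hyF : ∀ J ∈ Δ, F J ≠ y) (hJ : J ∈ Δ) (hJy : F J < y)
    (hs : sSup J = supOver Δ (F · < y) sSup) : ∀ J' ∈ Δ, IntLT J J' ↔ y < F J' := by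
  refine fun J' hJ' => ⟨fun h => ?_, fun h => (hord J hJ J' hJ').2 (hJy.trans h)⟩
  by_contra! h'
  have := le_supOver (P := (F · < y)) (fun J hJ => hΔ.sSup_le_one hJ) hJ' (h'.lt_of_ne (hyF J' hJ'))
  linarith [(hΔ.intLT_iff hJ hJ').1 h, hΔ.sInf_lt_sSup hJ']

theorem intLT_iff_of_sInf_eq_infOver (hΔ : IsIntervalFamily Δ) (hord : OrderPreserving Δ F)
    (hyF : ∀ J ∈ Δ, F J ≠ y) (hJ : J ∈ Δ) (hJy : y < F J)
    (hi : sInf J = infOver Δ (y < F ·) sInf) : ∀ J' ∈ Δ, IntLT J' J ↔ F J' < y := by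
  refine fun J' hJ' => ⟨fun h => ?_, fun h => (hord J' hJ' J hJ).2 (h.trans hJy)⟩
  by_contra! h'
  have := infOver_le (P := (y < F ·)) (fun J hJ => hΔ.sInf_nonneg hJ) hJ'
    ((hyF J' hJ').symm.lt_of_le h')
  linarith [(hΔ.intLT_iff hJ' hJ).1 h, hΔ.sInf_lt_sSup hJ']

theorem F_eq_supOver_of_sSup_eq (hΔ : IsIntervalFamily Δ) (hF : MapsTo F Δ (Icc 0 1))
    (hord : OrderPreserving Δ F) (hyF : ∀ J ∈ Δ, F J ≠ y) (hJ : J ∈ Δ) (hJy : F J < y)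
    (hs : sSup J = supOver Δ (F · < y) sSup) : F J = supOver Δ (F · < y) F := by
  refine le_antisymm (le_supOver (fun J hJ => (hF hJ).2) hJ hJy)
    (supOver_le (hF hJ).1 fun J' hJ' hJ'y => not_lt.1 fun hlt => ?_)
  exact ((intLT_iff_of_sSup_eq_supOver hΔ hord hyF hJ hJy hs J' hJ').1
    ((hord J hJ J' hJ').2 hlt)).not_gt hJ'y

theorem F_eq_infOver_of_sInf_eq (hΔ : IsIntervalFamily Δ) (hF : MapsTo F Δ (Icc 0 1))
    (hord : OrderPreserving Δ F) (hyF : ∀ J ∈ Δ, F J ≠ y) (hJ : J ∈ Δ) (hJy : y < F J)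
    (hi : sInf J = infOver Δ (y < F ·) sInf) : F J = infOver Δ (y < F ·) F := by
  refine le_antisymm (le_infOver (hF hJ).2 fun J' hJ' hJ'y => not_lt.1 fun hlt => ?_)
    (infOver_le (fun J hJ => (hF hJ).1) hJ hJy)
  exact ((intLT_iff_of_sInf_eq_infOver hΔ hord hyF hJ hJy hi J' hJ').1
    ((hord J' hJ' J hJ).2 hlt)).not_gt hJ'y

theorem sSup_eq_or_sInf_eq_of_mem (hΔ : IsIntervalFamily Δ) (hyF : ∀ J ∈ Δ, F J ≠ y)
    (ht : t ∈ Icc (supOver Δ (F · < y) sSup) (infOver Δ (y < F ·) sInf)) (hJ : J ∈ Δ)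
    (htJ : t ∈ J) :
    (F J < y ∧ sSup J = supOver Δ (F · < y) sSup) ∨
      (y < F J ∧ sInf J = infOver Δ (y < F ·) sInf) := by
  have hJt := (hΔ.mem_iff hJ).1 htJ
  rcases (hyF J hJ).lt_or_gt with h | h
  · exact .inl ⟨h, le_antisymm (le_supOver (fun J hJ => hΔ.sSup_le_one hJ) hJ h)
      (ht.1.trans hJt.2)⟩
  · exact .inr ⟨h, le_antisymm (hJt.1.trans ht.2) (infOver_le (fun J hJ => hΔ.sInf_nonneg hJ) hJ h)⟩

theorem supLeft_eq_supOver_of_notMem (hΔ : IsIntervalFamily Δ) (hyF : ∀ J ∈ Δ, F J ≠ y)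
    (ht : t ∈ Icc (supOver Δ (F · < y) sSup) (infOver Δ (y < F ·) sInf)) (htΔ : ∀ J ∈ Δ, t ∉ J)
    (g : Set ℝ → ℝ) : supLeft Δ g t = supOver Δ (F · < y) g := by
  refine supOver_congr fun J hJ => ⟨fun h => (hyF J hJ).lt_or_gt.resolve_right fun h' => ?_,
    fun h => ((le_supOver (fun J hJ => hΔ.sSup_le_one hJ) hJ h).trans ht.1).lt_of_ne
      fun he => htΔ J hJ (he ▸ hΔ.sSup_mem hJ)⟩
  linarith [infOver_le (P := (y < F ·)) (fun J hJ => hΔ.sInf_nonneg hJ) hJ h',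
    hΔ.sInf_lt_sSup hJ, ht.2]

theorem infRight_eq_infOver_of_notMem (hΔ : IsIntervalFamily Δ) (hyF : ∀ J ∈ Δ, F J ≠ y)
    (ht : t ∈ Icc (supOver Δ (F · < y) sSup) (infOver Δ (y < F ·) sInf)) (htΔ : ∀ J ∈ Δ, t ∉ J)
    (g : Set ℝ → ℝ) : infRight Δ g t = infOver Δ (y < F ·) g := by
  refine infOver_congr fun J hJ => ⟨fun h => (hyF J hJ).lt_or_gt.resolve_left fun h' => ?_,
    fun h => (ht.2.trans (infOver_le (fun J hJ => hΔ.sInf_nonneg hJ) hJ h)).lt_of_ne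
      fun he => htΔ J hJ (he.symm ▸ hΔ.sInf_mem hJ)⟩
  linarith [le_supOver (P := (F · < y)) (fun J hJ => hΔ.sSup_le_one hJ) hJ h',
    hΔ.sInf_lt_sSup hJ, ht.1]

theorem supOver_eq_infOver_of_eq (hc : StopConditions Δ F) (hΔ : IsIntervalFamily Δ)
    (hF : MapsTo F Δ (Icc 0 1)) (hord : OrderPreserving Δ F) (hyF : ∀ J ∈ Δ, F J ≠ y)
    (h : supOver Δ (F · < y) sSup = infOver Δ (y < F ·) sInf) :
    supOver Δ (F · < y) F = infOver Δ (y < F ·) F := by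
  have hm : supOver Δ (F · < y) sSup ∈ Icc (supOver Δ (F · < y) sSup) (infOver Δ (y < F ·) sInf) :=
    ⟨le_rfl, h.le⟩
  by_cases hmΔ : ∃ J ∈ Δ, supOver Δ (F · < y) sSup ∈ J
  · obtain ⟨J, hJ, hmJ⟩ := hmΔ
    rcases sSup_eq_or_sInf_eq_of_mem hΔ hyF hm hJ hmJ with ⟨hJy, hs⟩ | ⟨hJy, hi⟩
    · have c2 : sSup J = infOver Δ (IntLT J ·) sInf → F J = infOver Δ (IntLT J ·) F :=
        hc.2.1 J hJ
      have hcongr := intLT_iff_of_sSup_eq_supOver hΔ hord hyF hJ hJy hs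
      rw [infOver_congr hcongr, infOver_congr hcongr] at c2
      rw [← F_eq_supOver_of_sSup_eq hΔ hF hord hyF hJ hJy hs, c2 (hs.trans h)]
    · have c1 : sInf J = supOver Δ (IntLT · J) sSup → F J = supOver Δ (IntLT · J) F :=
        hc.1 J hJ
      have hcongr := intLT_iff_of_sInf_eq_infOver hΔ hord hyF hJ hJy hi
      rw [supOver_congr hcongr, supOver_congr hcongr] at c1
      rw [← F_eq_infOver_of_sInf_eq hΔ hF hord hyF hJ hJy hi, c1 (hi.trans h.symm)]
  · push Not at hmΔ
    have := hc.supLeft_eq_infRight hΔ (supOver_mem_Icc hΔ.mapsTo_sSup) hmΔ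
    simp only [supLeft_eq_supOver_of_notMem hΔ hyF hm hmΔ,
      infRight_eq_infOver_of_notMem hΔ hyF hm hmΔ] at this
    exact this h

theorem stopReparam_eq_interp (hΔ : IsIntervalFamily Δ) (hdisj : Δ.Pairwise Disjoint)
    (hF : MapsTo F Δ (Icc 0 1)) (hord : OrderPreserving Δ F) (hyF : ∀ J ∈ Δ, F J ≠ y)
    (ht : t ∈ Icc (supOver Δ (F · < y) sSup) (infOver Δ (y < F ·) sInf))
    (h : supOver Δ (F · < y) sSup = infOver Δ (y < F ·) sInf →
      supOver Δ (F · < y) F = infOver Δ (y < F ·) F) :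
    stopReparam Δ F t = interp (supOver Δ (F · < y) sSup) (infOver Δ (y < F ·) sInf)
      (supOver Δ (F · < y) F) (infOver Δ (y < F ·) F) t := by
  by_cases htΔ : ∃ J ∈ Δ, t ∈ J
  · obtain ⟨J, hJ, htJ⟩ := htΔ
    rw [stopReparam_of_mem hdisj hJ htJ]
    rcases sSup_eq_or_sInf_eq_of_mem hΔ hyF ht hJ htJ with ⟨hJy, hs⟩ | ⟨hJy, hi⟩
    · rw [le_antisymm (hs ▸ ((hΔ.mem_iff hJ).1 htJ).2) ht.1, interp_left,
        F_eq_supOver_of_sSup_eq hΔ hF hord hyF hJ hJy hs]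
    · rw [le_antisymm ht.2 (hi ▸ ((hΔ.mem_iff hJ).1 htJ).1), interp_right h,
        F_eq_infOver_of_sInf_eq hΔ hF hord hyF hJ hJy hi]
  · push Not at htΔ
    rw [stopReparam_of_notMem htΔ]
    simp only [supLeft_eq_supOver_of_notMem hΔ hyF ht htΔ,
      infRight_eq_infOver_of_notMem hΔ hyF ht htΔ]

theorem stopReparam_surjOn (hc : StopConditions Δ F) (hΔ : IsIntervalFamily Δ)
    (hdisj : Δ.Pairwise Disjoint) (hF : MapsTo F Δ (Icc 0 1)) (hord : OrderPreserving Δ F) :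
    SurjOn (stopReparam Δ F) (Icc 0 1) (Icc 0 1) := by
  intro y hy
  by_cases hyF : ∃ J ∈ Δ, F J = y
  · obtain ⟨J, hJ, rfl⟩ := hyF
    exact ⟨sInf J, hΔ.mapsTo_sInf hJ, stopReparam_of_mem hdisj hJ (hΔ.sInf_mem hJ)⟩
  push Not at hyF
  have hSI : supOver Δ (F · < y) sSup ≤ infOver Δ (y < F ·) sInf :=
    supOver_le_infOver hΔ.mapsTo_sSup hΔ.mapsTo_sInf fun J hJ hJy J' hJ' hJ'y =>
      ((hΔ.intLT_iff hJ hJ').1 ((hord J hJ J' hJ').2 (hJy.trans hJ'y))).le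
  have hLy : supOver Δ (F · < y) F ≤ y := supOver_le hy.1 fun _ _ h => h.le
  have hyR : y ≤ infOver Δ (y < F ·) F := le_infOver hy.2 fun _ _ h => h.le
  have hLR := supOver_eq_infOver_of_eq hc hΔ hF hord hyF
  have ht := interp_mem_Icc hLy hyR hSI
  refine ⟨_, ⟨(supOver_mem_Icc hΔ.mapsTo_sSup).1.trans ht.1,
    ht.2.trans (infOver_mem_Icc hΔ.mapsTo_sInf).2⟩, ?_⟩
  rw [stopReparam_eq_interp hΔ hdisj hF hord hyF ht hLR]
  exact interp_interp hSI hLy hyR hLR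

end Surjectivity

theorem MonotoneOn.continuousOn_of_surjOn {φ : ℝ → ℝ} {a b c d : ℝ}
    (hmono : MonotoneOn φ (Icc a b)) (hmaps : MapsTo φ (Icc a b) (Icc c d))
    (hsurj : SurjOn φ (Icc a b) (Icc c d)) : ContinuousOn φ (Icc a b) := by
  have hf : Monotone hmaps.restrict := fun x y hxy => hmono x.2 y.2 hxy
  have hcont := hf.continuous_of_surjective (hmaps.restrict_surjective_iff.2 hsurj)
  exact continuousOn_iff_continuous_domRestrict.2 (continuous_subtype_val.comp hcont)

theorem reparam_of_monotoneOn_of_surjOn {φ : ℝ → ℝ} (hmono : MonotoneOn φ (Icc 0 1))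
    (hmaps : MapsTo φ (Icc 0 1) (Icc 0 1)) (hsurj : SurjOn φ (Icc 0 1) (Icc 0 1)) : Reparam φ := by
  have h0 : (0 : ℝ) ∈ Icc 0 1 := left_mem_Icc.2 zero_le_one
  have h1 : (1 : ℝ) ∈ Icc 0 1 := right_mem_Icc.2 zero_le_one
  obtain ⟨t₀, ht₀, hφt₀⟩ := hsurj h0
  obtain ⟨t₁, ht₁, hφt₁⟩ := hsurj h1
  exact ⟨hmono.continuousOn_of_surjOn hmaps hsurj, hmono, hmaps,
    le_antisymm ((hmono h0 ht₀ ht₀.1).trans_eq hφt₀) (hmaps h0).1,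
    le_antisymm (hmaps h1).2 (hφt₁.symm.trans_le (hmono ht₁ h1 ht₁.2))⟩

theorem exists_reparam_of_stopConditions {Δ : Set (Set ℝ)} {F : Set ℝ → ℝ}
    (hΔ : IsIntervalFamily Δ) (hdisj : Δ.Pairwise Disjoint) (hF : MapsTo F Δ (Icc 0 1))
    (hord : OrderPreserving Δ F) (hc : StopConditions Δ F) :
    ∃ φ : ℝ → ℝ, Reparam φ ∧ {J | IsStopIntervalOf φ J} = Δ ∧ ∀ J ∈ Δ, ∀ t ∈ J, φ t = F J :=
  ⟨stopReparam Δ F,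
    reparam_of_monotoneOn_of_surjOn (stopReparam_monotoneOn hc hΔ hdisj hF hord)
      (stopReparam_mapsTo hΔ hdisj hF hord) (stopReparam_surjOn hc hΔ hdisj hF hord),
    Set.ext fun _ => isStopIntervalOf_stopReparam_iff hc hΔ hdisj hF hord,
    fun _ hJ _ ht => stopReparam_of_mem hdisj hJ ht⟩

theorem stmt_10_general (Δ : Set (Set ℝ)) (C : Set ℝ) (F : Set ℝ → ℝ)
    (hint : ∀ J ∈ Δ, ∃ a b : ℝ, 0 ≤ a ∧ a < b ∧ b ≤ 1 ∧ J = Set.Icc a b)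
    (hdisj : Δ.Pairwise Disjoint)
    (hC : C ⊆ Set.Icc 0 1)
    (hFmem : ∀ J ∈ Δ, F J ∈ C)
    (hFord : ∀ J ∈ Δ, ∀ J' ∈ Δ, (IntLT J J' ↔ F J < F J')) :
    (∃ φ : ℝ → ℝ, Reparam φ ∧ {J | IsStopIntervalOf φ J} = Δ ∧
        ∀ J ∈ Δ, ∀ t ∈ J, φ t = F J) ↔
    StopConditions Δ F := by
  have hF : MapsTo F Δ (Icc 0 1) := fun J hJ => hC (hFmem J hJ)
  refine ⟨fun ⟨_, hφ, hstop, hval⟩ => ?_, exists_reparam_of_stopConditions hint hdisj hF hFord⟩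
  exact stopConditions_of_reparam hint hF hφ (fun _ hK => hstop ▸ hK) hval

/-- Proposition 2 (necessary and sufficient conditions): there is a
reparametrization `φ` whose set of stop intervals is `Δ` and whose stop map is
`F` if and only if conditions (1)–(8) hold. -/
theorem stmt_10 (Δ : Set (Set ℝ)) (C : Set ℝ) (F : Set ℝ → ℝ)
    (hint : ∀ J ∈ Δ, ∃ a b : ℝ, 0 ≤ a ∧ a < b ∧ b ≤ 1 ∧ J = Set.Icc a b)
    (hdisj : Δ.Pairwise Disjoint)
    (hC : C ⊆ Set.Icc 0 1)
    (hFmem : ∀ J ∈ Δ, F J ∈ C)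
    (hFsurj : ∀ c ∈ C, ∃ J ∈ Δ, F J = c)
    (hFord : ∀ J ∈ Δ, ∀ J' ∈ Δ, (IntLT J J' ↔ F J < F J')) :
    (∃ φ : ℝ → ℝ, Reparam φ ∧ {J | IsStopIntervalOf φ J} = Δ ∧
        ∀ J ∈ Δ, ∀ t ∈ J, φ t = F J) ↔
    StopConditions Δ F :=
  stmt_10_general Δ C F hint hdisj hC hFmem hFord
end

section
/- For every set Δ ≠ {[0,1]} of pairwise disjoint non-degenerate closed subintervals of [0,1], there exists a reparametrization φ of [0,1] whose set of stop intervals is exactly Δ. -/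
/-!
The reparametrization is the distribution function of a probability measure `μ` without atoms
that vanishes on every interval of `Δ` and charges every other subinterval of `[0,1]`. Such a
`μ` lives on the closure of the set `S` of points of `(0,1)` interior to no interval of `Δ`. Two
disjoint closed intervals cannot abut, so `S` has no isolated points; every nonempty relatively
open piece of `S` therefore has perfect closure, which carries a Cantor-type measure, and a
weighted sum of these over a countable basis is `μ`. The hypothesis `Δ ≠ {[0,1]}` makes `S`
nonempty.
-/

open Set Classical

open MeasureTheory ProbabilityTheory Topology TopologicalSpace

lemma not_countable_cantorSpace : ¬ Countable (ℕ → Bool) := by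
  rw [← Cardinal.mk_le_aleph0_iff, not_le, ← Cardinal.power_def, Cardinal.mk_bool,
    Cardinal.mk_nat]
  exact Cardinal.cantor _

section Perfect

variable {X : Type*} [MetricSpace X] [CompleteSpace X] [MeasurableSpace X] [BorelSpace X]

/-- Push Lebesgue measure on `[0,1]` into `C` along a Borel isomorphism `ℝ ≃ᵐ (ℕ → Bool)`
followed by a continuous injection of the Cantor space into `C`. -/
theorem Perfect.exists_isProbabilityMeasure_nullSingletonClass {C : Set X} (hC : Perfect C)
    (hne : C.Nonempty) :
    ∃ ν : Measure X, IsProbabilityMeasure ν ∧ NullSingletonClass ν ∧ ν Cᶜ = 0 := by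
  obtain ⟨f, hfC, hfcont, hfinj⟩ := hC.exists_nat_bool_injection hne
  let e : ℝ ≃ᵐ (ℕ → Bool) :=
    PolishSpace.measurableEquivOfNotCountable not_countable not_countable_cantorSpace
  have hg : Measurable (f ∘ e) := hfcont.measurable.comp e.measurable
  have hginj : Function.Injective (f ∘ e) := hfinj.comp e.injective
  have : IsProbabilityMeasure (volume.restrict (Icc (0 : ℝ) 1)) := ⟨by simp⟩
  refine ⟨(volume.restrict (Icc (0 : ℝ) 1)).map (f ∘ e), ?_, ⟨fun x => ?_⟩, ?_⟩
  · exact Measure.isProbabilityMeasure_map hg.aemeasurable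
  · rw [Measure.map_apply hg (measurableSet_singleton x)]
    exact (Subsingleton.preimage subsingleton_singleton hginj).measure_zero _
  · rw [Measure.map_apply hg hC.closed.measurableSet.compl]
    convert measure_empty (μ := volume.restrict (Icc (0 : ℝ) 1))
    exact eq_empty_iff_forall_notMem.2 fun y hy => hy (hfC ⟨e y, rfl⟩)

variable [SecondCountableTopology X]

/-- A weighted sum, over a countable basis `B`, of probability measures carried by the perfect
sets `closure (b ∩ S)`, `b ∈ B`. -/
theorem Preperfect.exists_isFiniteMeasure_nullSingletonClass_pos {S : Set X} (hS : Preperfect S) :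
    ∃ μ : Measure X, IsFiniteMeasure μ ∧ NullSingletonClass μ ∧ μ (closure S)ᶜ = 0 ∧
      ∀ U, IsOpen U → (U ∩ S).Nonempty → 0 < μ U := by
  obtain ⟨B, hBc, -, hB⟩ := exists_countable_basis X
  have : Countable B := hBc.to_subtype
  have hν : ∀ b : B, ∃ ν : Measure X, ν univ ≤ 1 ∧ NullSingletonClass ν ∧
      ν (closure (b ∩ S))ᶜ = 0 ∧ (((b : Set X) ∩ S).Nonempty → ν (closure (b ∩ S)) = 1) := by
    intro b
    by_cases hbS : ((b : Set X) ∩ S).Nonempty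
    · obtain ⟨ν, _, hat, hsupp⟩ := (hS.open_inter (hB.isOpen b.2)).perfect_closure
        |>.exists_isProbabilityMeasure_nullSingletonClass (hbS.mono subset_closure)
      exact ⟨ν, prob_le_one, hat, hsupp,
        fun _ => (prob_compl_eq_zero_iff isClosed_closure.measurableSet).1 hsupp⟩
    · exact ⟨0, by simp, ⟨fun _ => rfl⟩, rfl, fun h => (hbS h).elim⟩
  choose ν hν1 hat hsupp hmass using hν
  obtain ⟨w, hw, hsum⟩ := ENNReal.exists_pos_sum_of_countable one_ne_zero B
  refine ⟨Measure.sum fun b => (w b : ENNReal) • ν b, ⟨?_⟩, ⟨fun x => ?_⟩, ?_, ?_⟩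
  · rw [Measure.sum_apply _ MeasurableSet.univ]
    calc ∑' b, ((w b : ENNReal) • ν b) univ ≤ ∑' b, (w b : ENNReal) :=
          ENNReal.tsum_le_tsum fun b => by simpa using mul_le_of_le_one_right' (hν1 b)
      _ < ⊤ := hsum.trans ENNReal.one_lt_top
  · simp [Measure.sum_apply, (hat _).measure_singleton]
  · rw [Measure.sum_apply _ isClosed_closure.measurableSet.compl]
    refine ENNReal.tsum_eq_zero.2 fun b => ?_
    simp [measure_mono_null (compl_subset_compl.2 (closure_mono inter_subset_right)) (hsupp b)]
  · rintro U hU ⟨p, hpU, hpS⟩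
    obtain ⟨V, hV, hVc, hVU⟩ := exists_mem_nhds_isClosed_subset (hU.mem_nhds hpU)
    obtain ⟨b, hbB, hpb, hbV⟩ := hB.mem_nhds_iff.1 hV
    have hclU : closure (b ∩ S) ⊆ U :=
      (closure_minimal (inter_subset_left.trans hbV) hVc).trans hVU
    have hνU : 1 ≤ ν ⟨b, hbB⟩ U := (hmass _ ⟨p, hpb, hpS⟩).symm.le.trans (measure_mono hclU)
    calc (0 : ENNReal) < w ⟨b, hbB⟩ := by exact_mod_cast hw _
      _ ≤ ((w ⟨b, hbB⟩ : ENNReal) • ν ⟨b, hbB⟩) U := by simpa using le_mul_of_one_le_right' hνU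
      _ ≤ (Measure.sum fun b => (w b : ENNReal) • ν b) U :=
        Measure.le_iff'.1 (Measure.le_sum (fun b => (w b : ENNReal) • ν b) _) U

theorem Preperfect.exists_isProbabilityMeasure_nullSingletonClass_pos {S : Set X}
    (hS : Preperfect S) (hne : S.Nonempty) :
    ∃ μ : Measure X, IsProbabilityMeasure μ ∧ NullSingletonClass μ ∧ μ (closure S)ᶜ = 0 ∧
      ∀ U, IsOpen U → (U ∩ S).Nonempty → 0 < μ U := by
  obtain ⟨μ, _, _, hsupp, hpos⟩ := hS.exists_isFiniteMeasure_nullSingletonClass_pos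
  have : NeZero μ := ⟨fun h => by simpa [h] using hpos univ isOpen_univ (by simpa using hne)⟩
  have hc : (μ univ)⁻¹ ≠ 0 := ENNReal.inv_ne_zero.2 (measure_ne_top μ univ)
  refine ⟨(μ univ)⁻¹ • μ, isProbabilityMeasureSMul, ⟨fun x => by simp⟩, by simp [hsupp],
    fun U hU hUS => ?_⟩
  simpa [Measure.smul_apply, pos_iff_ne_zero, hc] using (hpos U hU hUS).ne'

end Perfect

section cdf

variable (μ : Measure ℝ) [IsProbabilityMeasure μ]

lemma cdf_eq_cdf_iff {x y : ℝ} (hxy : x ≤ y) : cdf μ x = cdf μ y ↔ μ (Ioc x y) = 0 := by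
  rw [show μ (Ioc x y) = ENNReal.ofReal (cdf μ y - cdf μ x) by
    rw [← (cdf μ).measure_Ioc, measure_cdf], ENNReal.ofReal_eq_zero, sub_nonpos]
  exact ⟨fun h => h.ge, fun h => le_antisymm ((cdf μ).mono hxy) h⟩

lemma cdf_eq_of_mem_Icc {a b x : ℝ} (h : μ (Icc a b) = 0) (hx : x ∈ Icc a b) :
    cdf μ x = cdf μ a :=
  ((cdf_eq_cdf_iff μ hx.1).2
    (measure_mono_null (Ioc_subset_Icc_self.trans (Icc_subset_Icc_right hx.2)) h)).symm

variable [NullSingletonClass μ]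

lemma continuous_cdf : Continuous (cdf μ) := by
  refine continuous_iff_continuousAt.2 fun x => ?_
  rw [(cdf μ).mono.continuousAt_iff_leftLim_eq_rightLim, StieltjesFunction.rightLim_eq]
  have h := (cdf μ).measure_singleton x
  rw [measure_cdf, measure_singleton, eq_comm, ENNReal.ofReal_eq_zero, sub_nonpos] at h
  exact le_antisymm ((cdf μ).mono.leftLim_le le_rfl) h

lemma reparam_cdf (h : μ (Icc 0 1)ᶜ = 0) : Reparam (cdf μ) := by
  refine ⟨(continuous_cdf μ).continuousOn, (cdf μ).mono.monotoneOn _,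
    fun x _ => ⟨cdf_nonneg μ x, cdf_le_one μ x⟩, ?_, ?_⟩
  · rw [cdf_eq_real, measureReal_eq_zero_iff]
    refine measure_mono_null (fun z hz => ?_) (measure_union_null h (measure_singleton 0))
    rcases (mem_Iic.1 hz).lt_or_eq with hz | rfl
    · exact Or.inl fun hz' => hz.not_ge hz'.1
    · exact Or.inr rfl
  · rw [cdf_eq_real, measureReal_def, (prob_compl_eq_zero_iff measurableSet_Iic).1,
      ENNReal.toReal_one]
    exact measure_mono_null (compl_subset_compl.2 Icc_subset_Iic_self) h

end cdf

theorem IsPreconnected.exists_subset_interior_of_subset_biUnion {X : Type*} [TopologicalSpace X]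
    {Δ : Set (Set X)} (hdisj : Δ.Pairwise Disjoint) {T : Set X} (hT : IsPreconnected T)
    (hne : T.Nonempty) (hcover : T ⊆ ⋃ J ∈ Δ, interior J) : ∃ J ∈ Δ, T ⊆ interior J := by
  obtain ⟨p, hp⟩ := hne
  obtain ⟨J₀, hJ₀, hpJ₀⟩ := mem_iUnion₂.1 (hcover hp)
  have hdisj' : Disjoint (interior J₀) (⋃ J ∈ Δ \ {J₀}, interior J) := by
    refine disjoint_iUnion₂_right.2 fun J hJ => ?_
    exact (hdisj hJ₀ hJ.1 (Ne.symm hJ.2)).mono interior_subset interior_subset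
  refine ⟨J₀, hJ₀, hT.subset_left_of_subset_union isOpen_interior
    (isOpen_biUnion fun _ _ => isOpen_interior) hdisj' (fun z hz => ?_) ⟨p, hp, hpJ₀⟩⟩
  obtain ⟨J, hJ, hzJ⟩ := mem_iUnion₂.1 (hcover hz)
  by_cases hJJ₀ : J = J₀
  · exact Or.inl (hJJ₀ ▸ hzJ)
  · exact Or.inr (mem_iUnion₂.2 ⟨J, ⟨hJ, hJJ₀⟩, hzJ⟩)

/-- The support of the measure whose distribution function is the reparametrization. -/
def residualSet (Δ : Set (Set ℝ)) : Set ℝ := Ioo 0 1 \ ⋃ J ∈ Δ, interior J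

section residualSet

variable {Δ : Set (Set ℝ)}

lemma closure_residualSet_subset : closure (residualSet Δ) ⊆ Icc 0 1 :=
  closure_minimal (sdiff_subset.trans Ioo_subset_Icc_self) isClosed_Icc

lemma disjoint_interior_residualSet {J : Set ℝ} (hJ : J ∈ Δ) :
    Disjoint (interior J) (residualSet Δ) :=
  disjoint_right.2 fun _ hz hzJ => hz.2 (mem_iUnion₂.2 ⟨J, hJ, hzJ⟩)

variable {μ : Measure ℝ} [NullSingletonClass μ]

lemma measure_Icc_eq_zero_of_mem (hμ : μ (closure (residualSet Δ))ᶜ = 0) {a b : ℝ}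
    (hJ : Icc a b ∈ Δ) (hab : a ≤ b) : μ (Icc a b) = 0 := by
  have hsub : Icc a b ⊆ {a, b} ∪ (closure (residualSet Δ))ᶜ := fun z hz => by
    by_cases hzS : z ∈ closure (residualSet Δ)
    · refine Or.inl (Icc_sdiff_Ioo_same hab ▸ ⟨hz, fun hz' => ?_⟩)
      rw [← interior_Icc] at hz'
      exact disjoint_left.1 ((disjoint_interior_residualSet hJ).closure_right isOpen_interior)
        hz' hzS
    · exact Or.inr hzS
  exact measure_mono_null hsub (measure_union_null ((toFinite _).measure_zero μ) hμ)

variable (hclosed : ∀ J ∈ Δ, IsClosed J) (hdisj : Δ.Pairwise Disjoint)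
include hclosed hdisj

lemma exists_Icc_subset_of_disjoint_residualSet {u v : ℝ} (hu : 0 ≤ u) (huv : u < v)
    (hv : v ≤ 1) (h : Disjoint (Ioo u v) (residualSet Δ)) : ∃ J ∈ Δ, Icc u v ⊆ J := by
  have hcover : Ioo u v ⊆ ⋃ J ∈ Δ, interior J := fun z hz => by
    by_contra hz'
    exact disjoint_left.1 h hz ⟨Ioo_subset_Ioo hu hv hz, hz'⟩
  obtain ⟨J, hJ, hsub⟩ := isPreconnected_Ioo.exists_subset_interior_of_subset_biUnion hdisj
    (nonempty_Ioo.2 huv) hcover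
  exact ⟨J, hJ, closure_Ioo huv.ne ▸ closure_minimal (hsub.trans interior_subset) (hclosed J hJ)⟩

/-- A point of the residual set isolated on both sides would sit in two intervals of `Δ`
abutting at it, hence in the interior of one. -/
theorem preperfect_residualSet : Preperfect (residualSet Δ) := by
  intro z hz
  by_contra hacc
  obtain ⟨U, hU, hUz⟩ : ∃ U ∈ 𝓝 z, ∀ y ∈ U ∩ residualSet Δ, y = z := by
    simpa [accPt_iff_nhds] using hacc
  obtain ⟨ε, hε, hball⟩ := Metric.mem_nhds_iff.1 hU
  obtain ⟨hz0, hz1⟩ := hz.1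
  set δ := min ε (min z (1 - z))
  have hδ : 0 < δ := lt_min hε (lt_min hz0 (by linarith))
  have hδε : δ ≤ ε := min_le_left _ _
  have hδz : δ ≤ z := (min_le_right _ _).trans (min_le_left _ _)
  have hδz' : δ ≤ 1 - z := (min_le_right _ _).trans (min_le_right _ _)
  have hgap : ∀ y ∈ Ioo (z - δ) (z + δ), y ≠ z → y ∉ residualSet Δ := fun y hy hyz hyS =>
    hyz (hUz y ⟨hball (by rw [Metric.mem_ball, Real.dist_eq, abs_sub_lt_iff]; constructor <;>
      linarith [hy.1, hy.2]), hyS⟩)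
  obtain ⟨J₁, hJ₁, hsub₁⟩ := exists_Icc_subset_of_disjoint_residualSet hclosed hdisj
    (u := z - δ) (v := z) (by linarith) (by linarith) hz1.le
    (disjoint_left.2 fun y hy => hgap y ⟨hy.1, by linarith [hy.2]⟩ hy.2.ne)
  obtain ⟨J₂, hJ₂, hsub₂⟩ := exists_Icc_subset_of_disjoint_residualSet hclosed hdisj
    (u := z) (v := z + δ) hz0.le (by linarith) (by linarith)
    (disjoint_left.2 fun y hy => hgap y ⟨by linarith [hy.1], hy.2⟩ hy.1.ne')
  have hJ : J₁ = J₂ := hdisj.eq hJ₁ hJ₂ <| not_disjoint_iff.2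
    ⟨z, hsub₁ ⟨by linarith, le_rfl⟩, hsub₂ ⟨le_rfl, by linarith⟩⟩
  have hIoo : Ioo (z - δ) (z + δ) ⊆ J₁ := fun y hy => by
    rcases le_total y z with hyz | hyz
    · exact hsub₁ ⟨hy.1.le, hyz⟩
    · exact hJ ▸ hsub₂ ⟨hyz, hy.2.le⟩
  exact disjoint_left.1 (disjoint_interior_residualSet hJ₁)
    (interior_mono hIoo (by rw [interior_Ioo]; constructor <;> linarith)) hz

end residualSet

section
variable {Δ : Set (Set ℝ)}
    (hint : ∀ J ∈ Δ, ∃ a b : ℝ, 0 ≤ a ∧ a < b ∧ b ≤ 1 ∧ J = Set.Icc a b)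
    (hdisj : Δ.Pairwise Disjoint)

include hint in
lemma isClosed_of_mem {J : Set ℝ} (hJ : J ∈ Δ) : IsClosed J := by
  obtain ⟨a, b, -, -, -, rfl⟩ := hint J hJ
  exact isClosed_Icc

include hint hdisj

lemma residualSet_nonempty (hne : Δ ≠ {Icc 0 1}) : (residualSet Δ).Nonempty := by
  by_contra hS
  obtain ⟨J, hJ, hsub⟩ := exists_Icc_subset_of_disjoint_residualSet
    (fun _ => isClosed_of_mem hint) hdisj le_rfl zero_lt_one le_rfl
    (by rw [not_nonempty_iff_eq_empty.1 hS]; exact disjoint_empty _)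
  have hJ01 : J = Icc 0 1 := by
    obtain ⟨a, b, ha, -, hb, rfl⟩ := hint J hJ
    exact hsub.antisymm' (Icc_subset_Icc ha hb)
  refine hne (eq_singleton_iff_unique_mem.2 ⟨hJ01 ▸ hJ, fun K hK => ?_⟩)
  obtain ⟨a, b, ha, hab, hb, rfl⟩ := hint K hK
  by_contra hKJ
  exact disjoint_left.1 (hdisj hK hJ (hJ01 ▸ hKJ)) (left_mem_Icc.2 hab.le)
    (hsub ⟨ha, hab.le.trans hb⟩)

theorem setOf_isStopIntervalOf_eq {φ : ℝ → ℝ}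
    (hconst : ∀ J ∈ Δ, ∀ x ∈ J, ∀ y ∈ J, φ x = φ y)
    (hsep : ∀ x y, 0 ≤ x → x < y → y ≤ 1 → φ x = φ y → ∃ J ∈ Δ, Icc x y ⊆ J) :
    {J | IsStopIntervalOf φ J} = Δ := by
  have hsep' : ∀ x ∈ Icc (0 : ℝ) 1, ∀ y ∈ Icc (0 : ℝ) 1, x ≠ y → φ x = φ y →
      ∃ J ∈ Δ, x ∈ J ∧ y ∈ J := by
    intro x hx y hy hxy h
    rcases hxy.lt_or_gt with hxy | hxy
    · obtain ⟨J, hJ, hsub⟩ := hsep x y hx.1 hxy hy.2 h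
      exact ⟨J, hJ, hsub (left_mem_Icc.2 hxy.le), hsub (right_mem_Icc.2 hxy.le)⟩
    · obtain ⟨J, hJ, hsub⟩ := hsep y x hy.1 hxy hx.2 h.symm
      exact ⟨J, hJ, hsub (right_mem_Icc.2 hxy.le), hsub (left_mem_Icc.2 hxy.le)⟩
  have hlevel : ∀ J ∈ Δ, ∀ x ∈ J, Icc 0 1 ∩ φ ⁻¹' {φ x} = J := by
    intro J hJ x hx
    obtain ⟨a, b, ha, -, hb, rfl⟩ := hint J hJ
    refine Subset.antisymm (fun y ⟨hy, hφy⟩ => ?_)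
      (fun y hy => ⟨Icc_subset_Icc ha hb hy, hconst _ hJ y hy x hx⟩)
    rcases eq_or_ne x y with rfl | hxy
    · exact hx
    obtain ⟨K, hK, hxK, hyK⟩ := hsep' x (Icc_subset_Icc ha hb hx) y hy hxy hφy.symm
    rwa [hdisj.eq hJ hK (not_disjoint_iff.2 ⟨x, hx, hxK⟩)]
  ext J
  constructor
  · rintro ⟨t, rfl, x, ⟨hx, hφx⟩, y, ⟨hy, hφy⟩, hxy⟩
    obtain ⟨K, hK, hxK, -⟩ := hsep' x hx y hy hxy (hφx.trans hφy.symm)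
    have := hlevel K hK x hxK
    rw [show φ x = t from hφx] at this
    rwa [this]
  · intro hJ
    obtain ⟨a, b, -, hab, -, rfl⟩ := hint J hJ
    exact ⟨φ a, hlevel _ hJ a (left_mem_Icc.2 hab.le),
      a, left_mem_Icc.2 hab.le, b, right_mem_Icc.2 hab.le, hab.ne⟩

end

/-- For every family `Δ ≠ {[0,1]}` of pairwise disjoint non-degenerate closed
subintervals of `[0,1]`, there is a reparametrization whose set of stop
intervals is exactly `Δ`. -/
theorem stmt_11 (Δ : Set (Set ℝ))
    (hint : ∀ J ∈ Δ, ∃ a b : ℝ, 0 ≤ a ∧ a < b ∧ b ≤ 1 ∧ J = Set.Icc a b)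
    (hdisj : Δ.Pairwise Disjoint)
    (hne : Δ ≠ {Set.Icc 0 1}) :
    ∃ φ : ℝ → ℝ, Reparam φ ∧ {J | IsStopIntervalOf φ J} = Δ := by
  have hclosed : ∀ J ∈ Δ, IsClosed J := fun _ => isClosed_of_mem hint
  obtain ⟨μ, _, _, hsupp, hpos⟩ := (preperfect_residualSet hclosed hdisj)
    |>.exists_isProbabilityMeasure_nullSingletonClass_pos (residualSet_nonempty hint hdisj hne)
  refine ⟨cdf μ, reparam_cdf μ
    (measure_mono_null (compl_subset_compl.2 closure_residualSet_subset) hsupp),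
    setOf_isStopIntervalOf_eq hint hdisj (fun J hJ x hx y hy => ?_) fun x y hx hxy hy h => ?_⟩
  · obtain ⟨a, b, -, hab, -, rfl⟩ := hint J hJ
    have hnull := measure_Icc_eq_zero_of_mem hsupp hJ hab.le
    rw [cdf_eq_of_mem_Icc μ hnull hx, cdf_eq_of_mem_Icc μ hnull hy]
  · by_contra hJ
    have hmeet : (Ioo x y ∩ residualSet Δ).Nonempty := not_disjoint_iff_nonempty_inter.1
      fun hd => hJ (exists_Icc_subset_of_disjoint_residualSet hclosed hdisj hx hxy hy hd)
    exact (hpos _ isOpen_Ioo hmeet).ne'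
      (measure_mono_null Ioo_subset_Ioc_self ((cdf_eq_cdf_iff μ hxy.le).1 h))
end

section
/- Every at most countable subset C ⊆ [0,1] occurs as the set of stop values of some reparametrization of [0,1]. -/
open Set Classical

/-!
Choose a probability measure `μ` on `[0,1]` whose atoms are exactly the points of `C`. The
function `G s = (s + μ (-∞, s]) / 2` is strictly increasing and right-continuous, jumps exactly at
the atoms, and satisfies `G (0⁻) = 0`, `G 1 = 1`. Its generalized inverse
`φ y = inf {s | y ≤ G s}` is the lower adjoint of `G`, hence monotone, and it is surjective
(`φ (G s) = s`), hence continuous. Finally `φ⁻¹ {t} = [G (t⁻), G t]`, which is non-degenerate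
exactly when `G` jumps at `t`, i.e. when `t ∈ C`.
-/

open Filter Topology MeasureTheory ProbabilityTheory Function
open scoped NNReal

theorem Set.nontrivial_Icc_iff {α : Type*} [PartialOrder α] {a b : α} :
    (Icc a b).Nontrivial ↔ a < b := by
  refine ⟨fun ⟨x, hx, y, hy, hxy⟩ => (hx.1.trans hx.2).lt_of_ne ?_,
    fun h => ⟨a, left_mem_Icc.2 h.le, b, right_mem_Icc.2 h.le, h.ne⟩⟩
  rintro rfl
  exact hxy ((le_antisymm hx.2 hx.1).trans (le_antisymm hy.2 hy.1).symm)

namespace StieltjesFunction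

variable (G : StieltjesFunction ℝ)

noncomputable def lowerInv (y : ℝ) : ℝ := sInf {s | y ≤ G s}

variable {G}

theorem gc_lowerInv (hbot : Tendsto G atBot atBot) (htop : Tendsto G atTop atTop) :
    GaloisConnection G.lowerInv G := by
  intro y s
  have hne : {s | y ≤ G s}.Nonempty := (htop.eventually_ge_atTop y).exists
  have hbdd : BddBelow {s | y ≤ G s} := by
    obtain ⟨a, ha⟩ := (hbot.eventually_lt_atBot y).exists_forall_of_atBot
    exact ⟨a, fun s hs => le_of_not_gt fun hsa => (hs.trans_lt (ha s hsa.le)).false⟩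
  refine ⟨fun h => ?_, fun h => csInf_le hbdd h⟩
  rw [← G.iInf_Ioi_eq s]
  refine le_ciInf fun r => ?_
  obtain ⟨a, ha, har⟩ := exists_lt_of_csInf_lt hne (h.trans_lt r.2)
  exact ha.trans (G.mono har.le)

theorem le_lowerInv_iff (gc : GaloisConnection G.lowerInv G) (hG : StrictMono G) {t y : ℝ} :
    t ≤ G.lowerInv y ↔ leftLim G t ≤ y := by
  constructor
  · intro h
    rw [G.mono.leftLim_eq_sSup]
    refine csSup_le (nonempty_Iio.image G) ?_
    rintro _ ⟨s, hs, rfl⟩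
    have hys : ¬G.lowerInv y ≤ s := not_le.2 (hs.trans_le h)
    exact (not_le.1 (mt (gc y s).2 hys)).le
  · intro h
    by_contra! hlt
    obtain ⟨m, hym, hmt⟩ := exists_between hlt
    exact ((gc.le_u_l y).trans_lt (hG hym)).not_ge ((G.mono.le_leftLim hmt).trans h)

theorem preimage_lowerInv_Icc (gc : GaloisConnection G.lowerInv G) (hG : StrictMono G)
    (a b : ℝ) : G.lowerInv ⁻¹' Icc a b = Icc (leftLim G a) (G b) := by
  ext y
  exact and_congr (le_lowerInv_iff gc hG) (gc y b)

theorem lowerInv_apply (gc : GaloisConnection G.lowerInv G) (hG : StrictMono G) (s : ℝ) :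
    G.lowerInv (G s) = s :=
  le_antisymm (gc.l_u_le s) ((le_lowerInv_iff gc hG).2 (G.mono.leftLim_le le_rfl))

theorem continuous_lowerInv (gc : GaloisConnection G.lowerInv G) (hG : StrictMono G) :
    Continuous G.lowerInv :=
  gc.monotone_l.continuous_of_surjective fun s => ⟨G s, lowerInv_apply gc hG s⟩

theorem nontrivial_preimage_lowerInv_singleton_iff (gc : GaloisConnection G.lowerInv G)
    (hG : StrictMono G) (t : ℝ) : (G.lowerInv ⁻¹' {t}).Nontrivial ↔ G.measure {t} ≠ 0 := by
  rw [← Icc_self, preimage_lowerInv_Icc gc hG, nontrivial_Icc_iff, Icc_self, measure_singleton,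
    ne_eq, ENNReal.ofReal_eq_zero, not_le, sub_pos]

theorem preimage_lowerInv_unitInterval (gc : GaloisConnection G.lowerInv G) (hG : StrictMono G)
    (h0 : leftLim G 0 = 0) (h1 : G 1 = 1) :
    G.lowerInv ⁻¹' Icc 0 1 = Icc 0 1 := by
  rw [preimage_lowerInv_Icc gc hG, h0, h1]

theorem reparam_lowerInv (gc : GaloisConnection G.lowerInv G) (hG : StrictMono G)
    (h0 : leftLim G 0 = 0) (h1 : G 1 = 1) :
    Reparam G.lowerInv := by
  have hI := preimage_lowerInv_unitInterval gc hG h0 h1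
  refine ⟨(continuous_lowerInv gc hG).continuousOn, gc.monotone_l.monotoneOn _,
    fun y hy => by rwa [← hI] at hy, ?_, ?_⟩
  · have hG0 : 0 ≤ G 0 := h0.symm.trans_le (G.mono.leftLim_le le_rfl)
    exact le_antisymm ((gc 0 0).2 hG0) ((le_lowerInv_iff gc hG).2 h0.le)
  · simpa only [h1] using lowerInv_apply gc hG 1

theorem isStopValueOf_lowerInv_iff (gc : GaloisConnection G.lowerInv G) (hG : StrictMono G)
    (h0 : leftLim G 0 = 0) (h1 : G 1 = 1) (t : ℝ) :
    IsStopValueOf G.lowerInv t ↔ t ∈ Icc 0 1 ∧ G.measure {t} ≠ 0 := by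
  conv_lhs => rw [IsStopValueOf, ← preimage_lowerInv_unitInterval gc hG h0 h1, ← preimage_inter]
  by_cases ht : t ∈ Icc 0 1
  · rw [inter_eq_right.2 (singleton_subset_iff.2 ht),
      nontrivial_preimage_lowerInv_singleton_iff gc hG, and_iff_right ht]
  · simp [inter_singleton_eq_empty.2 ht, ht]

end StieltjesFunction

namespace ProbabilityTheory

noncomputable def avgCdf (μ : Measure ℝ) : StieltjesFunction ℝ :=
  (2⁻¹ : ℝ≥0) • (StieltjesFunction.id + cdf μ)

variable (μ : Measure ℝ)

theorem avgCdf_apply (s : ℝ) : avgCdf μ s = (s + cdf μ s) / 2 := by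
  change ((2⁻¹ : ℝ≥0) : ℝ) * (s + cdf μ s) = _
  push_cast
  ring

theorem strictMono_avgCdf : StrictMono (avgCdf μ) := fun a b hab => by
  simp only [avgCdf_apply]
  linarith [monotone_cdf μ hab.le]

theorem tendsto_avgCdf_atTop : Tendsto (avgCdf μ) atTop atTop :=
  tendsto_atTop_mono (fun s => by rw [avgCdf_apply, id]; linarith [cdf_nonneg μ s])
    (tendsto_id.atTop_div_const two_pos)

theorem tendsto_avgCdf_atBot : Tendsto (avgCdf μ) atBot atBot :=
  tendsto_atBot_mono (fun s => by rw [avgCdf_apply, id]; linarith [cdf_le_one μ s])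
    ((tendsto_atBot_add_const_right _ 1 tendsto_id).atBot_div_const two_pos)

variable {μ} [IsProbabilityMeasure μ]

theorem measure_avgCdf : (avgCdf μ).measure = (2⁻¹ : ℝ≥0) • (volume + μ) := by
  rw [avgCdf, StieltjesFunction.measure_smul, StieltjesFunction.measure_add, measure_cdf,
    ← Real.volume_eq_stieltjes_id]

theorem measure_avgCdf_singleton_ne_zero_iff (t : ℝ) :
    (avgCdf μ).measure {t} ≠ 0 ↔ μ {t} ≠ 0 := by
  simp [measure_avgCdf]

theorem leftLim_avgCdf_zero (h : μ (Iio 0) = 0) : leftLim (avgCdf μ) 0 = 0 := by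
  refine leftLim_eq_of_tendsto ?_
  have hcdf : ∀ s < 0, cdf μ s = 0 := fun s hs => by
    rw [cdf_eq_real, measureReal_def, measure_mono_null (Iic_subset_Iio.2 hs) h,
      ENNReal.toReal_zero]
  have hlim : Tendsto (fun s : ℝ => s / 2) (𝓝[<] 0) (𝓝 0) := by
    simpa using (tendsto_id.div_const (2 : ℝ)).mono_left (nhdsWithin_le_nhds (a := (0 : ℝ)))
  refine hlim.congr' ?_
  filter_upwards [self_mem_nhdsWithin] with s hs
  rw [avgCdf_apply, hcdf s hs, add_zero]

theorem avgCdf_one (h : μ (Ioi 1) = 0) : avgCdf μ 1 = 1 := by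
  have : μ (Iic 1) = 1 := (prob_compl_eq_zero_iff measurableSet_Iic).1 (by rwa [compl_Iic])
  rw [avgCdf_apply, cdf_eq_real, measureReal_def, this]
  norm_num

end ProbabilityTheory

theorem MeasureTheory.exists_isProbabilityMeasure_atoms_eq {α : Type*} [MeasurableSpace α]
    [MeasurableSingletonClass α] {s : Set α} (hs : s.Countable) (hne : s.Nonempty) :
    ∃ μ : Measure α, IsProbabilityMeasure μ ∧ μ sᶜ = 0 ∧ ∀ a, μ {a} ≠ 0 ↔ a ∈ s := by
  obtain ⟨e, rfl⟩ := hs.exists_eq_range hne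
  let p : unitInterval := ⟨2⁻¹, by norm_num, by norm_num⟩
  have hp0 : p ≠ 0 := fun h => by simpa [p] using congrArg Subtype.val h
  have hp1 : p ≠ 1 := fun h => by norm_num [p, ← Subtype.val_inj] at h
  have he : Measurable e := measurable_from_nat
  refine ⟨(geometricMeasure p).map e, Measure.isProbabilityMeasure_map he.aemeasurable, ?_,
    fun a => ?_⟩
  · rw [Measure.map_apply he hs.measurableSet.compl, preimage_compl, preimage_range, compl_univ,
      measure_empty]
  rw [Measure.map_apply he (measurableSet_singleton a)]
  refine ⟨fun h => ?_, ?_⟩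
  · by_contra ha
    exact h (by rw [preimage_singleton_eq_empty.2 ha, measure_empty])
  · rintro ⟨n, rfl⟩
    have hn : 0 < geometricMeasure p {n} := by
      rw [geometricMeasure_singleton hp0]
      exact ENNReal.ofReal_pos.2 (geometricMeasure_pos hp0 hp1 n)
    have hsub : {n} ⊆ e ⁻¹' {e n} := singleton_subset_iff.2 rfl
    exact (hn.trans_le (measure_mono hsub)).ne'

theorem exists_isProbabilityMeasure_unitInterval_atoms_eq {C : Set ℝ} (hC : C ⊆ Icc 0 1)
    (hcount : C.Countable) :
    ∃ μ : Measure ℝ, IsProbabilityMeasure μ ∧ μ (Icc 0 1)ᶜ = 0 ∧ ∀ t, μ {t} ≠ 0 ↔ t ∈ C := by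
  rcases C.eq_empty_or_nonempty with rfl | hne
  · exact ⟨volume.restrict (Icc 0 1), ⟨by simp⟩, by simp, fun t => by simp⟩
  · obtain ⟨μ, hμ, hsupp, hatoms⟩ := exists_isProbabilityMeasure_atoms_eq hcount hne
    exact ⟨μ, hμ, measure_mono_null (compl_subset_compl.2 hC) hsupp, hatoms⟩

open StieltjesFunction in
/-- Every at most countable subset `C ⊆ [0,1]` is the set of stop values of
some reparametrization. -/
theorem stmt_12 (C : Set ℝ) (hC : C ⊆ Set.Icc 0 1) (hcount : C.Countable) :
    ∃ φ : ℝ → ℝ, Reparam φ ∧ {t | IsStopValueOf φ t} = C := by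
  obtain ⟨μ, _, hμ, hatoms⟩ := exists_isProbabilityMeasure_unitInterval_atoms_eq hC hcount
  have gc := gc_lowerInv (tendsto_avgCdf_atBot μ) (tendsto_avgCdf_atTop μ)
  have hG := strictMono_avgCdf μ
  have hout : ∀ s ⊆ (Icc 0 1)ᶜ, μ s = 0 := fun s hs => measure_mono_null hs hμ
  have h0 := leftLim_avgCdf_zero (hout _ fun _ hx h => not_le.2 hx h.1)
  have h1 := avgCdf_one (hout _ fun _ hx h => not_le.2 hx h.2)
  refine ⟨(avgCdf μ).lowerInv, reparam_lowerInv gc hG h0 h1, ?_⟩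
  ext t
  rw [mem_ofPred_eq, isStopValueOf_lowerInv_iff gc hG h0 h1,
    measure_avgCdf_singleton_ne_zero_iff, hatoms, and_iff_right_of_imp (@hC t)]
end

section
/- For every continuous path p : [0,1] → X into a Hausdorff space X, there exist a regular path q : [0,1] → X and a reparametrization φ of [0,1] such that p = q ∘ φ. -/
open Set Classical

/-- A path `q` is regular if it is constant or not constant on any
non-degenerate closed subinterval of `[0,1]`. -/
def IsRegularPath {X : Type*} (q : ℝ → X) : Prop :=
  (∀ s ∈ Set.Icc (0:ℝ) 1, ∀ t ∈ Set.Icc (0:ℝ) 1, q s = q t) ∨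
  (∀ a b : ℝ, 0 ≤ a → a < b → b ≤ 1 →
    ∃ s ∈ Set.Icc a b, ∃ t ∈ Set.Icc a b, q s ≠ q t)

/-! The parametrization `φ` must be constant exactly on the intervals where `p` is constant.
For each pair of rationals `r < s` with `p r ≠ p s`, Urysohn's lemma on the compact Hausdorff
space `p '' [0,1]` gives a continuous `f = g ∘ p` with `f r < f s`; the running maximum of `f`
from `r` is continuous, monotone, constant wherever `p` is, and increases strictly from `r` to
`s`. A weighted sum of these running maxima over all such pairs is a continuous monotone `φ₀`
whose fibres are exactly the intervals of constancy of `p`, because by density every interval on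
which `p` is not constant contains such a pair. Normalised, `φ₀` is a reparametrization; `p`
descends along it to `q`, continuous because a continuous surjection between compact Hausdorff
intervals is a quotient map, and regular since `φ₀` collapses only intervals on which `p` is
constant. -/

open Function

section RunningSup

/-- The maximum of `f` on `[a, t]`; for `t < a` it is `f a`. -/
noncomputable def runningSup (f : ℝ → ℝ) (a t : ℝ) : ℝ := sSup (f '' Icc a (max a t))

variable {f : ℝ → ℝ} {a : ℝ}

theorem runningSup_of_le {t : ℝ} (ht : t ≤ a) : runningSup f a t = f a := by
  simp [runningSup, max_eq_left ht]

theorem le_runningSup (hf : Continuous f) {t u : ℝ} (hu : u ∈ Icc a t) :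
    f u ≤ runningSup f a t :=
  le_csSup (isCompact_Icc.bddAbove_image hf.continuousOn)
    (mem_image_of_mem f ⟨hu.1, hu.2.trans (le_max_right a t)⟩)

theorem runningSup_mem_Icc {c d : ℝ} (hcd : ∀ t, f t ∈ Icc c d) (t : ℝ) :
    runningSup f a t ∈ Icc c d :=
  ⟨(hcd a).1.trans (le_csSup ⟨d, forall_mem_image.2 fun u _ => (hcd u).2⟩
      (mem_image_of_mem f (left_mem_Icc.2 (le_max_left a t)))),
    csSup_le ((nonempty_Icc.2 (le_max_left a t)).image f)
      (forall_mem_image.2 fun u _ => (hcd u).2)⟩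

theorem monotone_runningSup (hf : Continuous f) : Monotone (runningSup f a) := fun x _ hxy =>
  csSup_le_csSup (isCompact_Icc.bddAbove_image hf.continuousOn)
    ((nonempty_Icc.2 (le_max_left a x)).image f)
    (image_mono (Icc_subset_Icc le_rfl (max_le_max le_rfl hxy)))

theorem continuous_runningSup (hf : Continuous f) : Continuous (runningSup f a) := by
  have h : runningSup f a =
      fun t => sSup ((fun t s => f (AffineMap.lineMap a (max a t) s)) t '' Icc (0 : ℝ) 1) := by
    funext t
    rw [runningSup, ← segment_eq_Icc (le_max_left a t), segment_eq_image_lineMap, image_image]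
  rw [h]
  refine isCompact_Icc.continuous_sSup ?_
  simp only [AffineMap.lineMap_apply_ring']
  fun_prop

theorem runningSup_eq_of_subsingleton {x y : ℝ} (hxy : x ≤ y)
    (hf : (f '' Icc x y).Subsingleton) : runningSup f a x = runningSup f a y := by
  refine congrArg sSup (Subset.antisymm
    (image_mono (Icc_subset_Icc le_rfl (max_le_max le_rfl hxy))) ?_)
  rintro _ ⟨u, hu, rfl⟩
  by_cases hux : u ≤ max a x
  · exact ⟨u, ⟨hu.1, hux⟩, rfl⟩
  · obtain ⟨hau, hxu⟩ := max_lt_iff.1 (not_le.1 hux)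
    have huy : u ≤ y := (le_max_iff.1 hu.2).resolve_left hau.not_ge
    have hmx : max a x ∈ Icc x y := ⟨le_max_right a x, (not_le.1 hux).le.trans huy⟩
    exact ⟨max a x, right_mem_Icc.2 (le_max_left a x),
      hf (mem_image_of_mem f hmx) (mem_image_of_mem f ⟨hxu.le, huy⟩)⟩

theorem runningSup_lt_runningSup (hf : Continuous f) {x y s : ℝ} (hxa : x ≤ a) (has : a ≤ s)
    (hsy : s ≤ y) (hfs : f a < f s) : runningSup f a x < runningSup f a y :=
  calc runningSup f a x = f a := runningSup_of_le hxa
    _ < f s := hfs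
    _ ≤ runningSup f a y := le_runningSup hf ⟨has, hsy⟩

end RunningSup

section WeightedSum

variable {ι : Type*} {w : ι → ℝ} {F : ι → ℝ → ℝ}

theorem summable_mul_of_mem_Icc (hw : Summable w) (hw0 : ∀ i, 0 ≤ w i)
    (hF : ∀ i t, F i t ∈ Icc (0 : ℝ) 1) (t : ℝ) : Summable fun i => w i * F i t :=
  hw.of_nonneg_of_le (fun i => mul_nonneg (hw0 i) (hF i t).1)
    fun i => mul_le_of_le_one_right (hw0 i) (hF i t).2

theorem continuous_tsum_mul (hw : Summable w) (hw0 : ∀ i, 0 ≤ w i)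
    (hF : ∀ i t, F i t ∈ Icc (0 : ℝ) 1) (hFc : ∀ i, Continuous (F i)) :
    Continuous fun t => ∑' i, w i * F i t :=
  continuous_tsum (fun i => continuous_const.mul (hFc i)) hw fun i t => by
    rw [norm_mul, Real.norm_of_nonneg (hw0 i), Real.norm_of_nonneg (hF i t).1]
    exact mul_le_of_le_one_right (hw0 i) (hF i t).2

theorem monotone_tsum_mul (hw : Summable w) (hw0 : ∀ i, 0 ≤ w i)
    (hF : ∀ i t, F i t ∈ Icc (0 : ℝ) 1) (hFm : ∀ i, Monotone (F i)) :
    Monotone fun t => ∑' i, w i * F i t := fun x y hxy =>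
  (summable_mul_of_mem_Icc hw hw0 hF x).tsum_le_tsum
    (fun i => mul_le_mul_of_nonneg_left (hFm i hxy) (hw0 i)) (summable_mul_of_mem_Icc hw hw0 hF y)

theorem tsum_mul_lt_tsum_mul (hw : Summable w) (hw0 : ∀ i, 0 < w i)
    (hF : ∀ i t, F i t ∈ Icc (0 : ℝ) 1) (hFm : ∀ i, Monotone (F i)) {x y : ℝ}
    (hxy : x ≤ y) {i : ι} (hi : F i x < F i y) : ∑' i, w i * F i x < ∑' i, w i * F i y :=
  (summable_mul_of_mem_Icc hw (fun i => (hw0 i).le) hF x).tsum_lt_tsum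
    (fun j => mul_le_mul_of_nonneg_left (hFm j hxy) (hw0 j).le)
    (mul_lt_mul_of_pos_left hi (hw0 i)) (summable_mul_of_mem_Icc hw (fun i => (hw0 i).le) hF y)

end WeightedSum

theorem exists_continuous_factor_lt {α X : Type*} [TopologicalSpace α] [TopologicalSpace X]
    [T2Space X] {p : α → X} (hp : Continuous p) (hK : IsCompact (range p)) {a b : α}
    (hab : p a ≠ p b) :
    ∃ f : α → ℝ, Continuous f ∧ (∀ t, f t ∈ Icc (0 : ℝ) 1) ∧
      (∀ u v, p u = p v → f u = f v) ∧ f a < f b := by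
  have : CompactSpace (range p) := isCompact_iff_compactSpace.1 hK
  obtain ⟨g, hga, hgb, hg01⟩ := exists_continuous_zero_one_of_isClosed
    (isClosed_singleton (x := rangeFactorization p a))
    (isClosed_singleton (x := rangeFactorization p b))
    (disjoint_singleton.2 fun h => hab (congrArg Subtype.val h))
  refine ⟨g ∘ rangeFactorization p, g.continuous.comp hp.rangeFactorization,
    fun t => hg01 _, fun u v huv => congrArg g (Subtype.ext huv), ?_⟩
  simp [hga rfl, hgb rfl]

theorem exists_rat_mem_Icc_ne_of_not_subsingleton {X : Type*} [TopologicalSpace X] [T1Space X]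
    {p : ℝ → X} (hp : Continuous p) {x y : ℝ} (h : ¬ (p '' Icc x y).Subsingleton) :
    ∃ r s : ℚ, x ≤ r ∧ r ≤ s ∧ s ≤ y ∧ p r ≠ p s := by
  by_contra! hrat
  have hxy : x < y := lt_of_not_ge fun hyx => h ((subsingleton_Icc_of_ge hyx).image p)
  obtain ⟨r₀, hxr₀, hr₀y⟩ := exists_rat_btwn hxy
  have hdense : Icc x y ⊆ closure (Ioo x y ∩ range ((↑) : ℚ → ℝ)) := by
    rw [← closure_Ioo hxy.ne]
    exact closure_minimal (Rat.denseRange_cast.open_subset_closure_inter isOpen_Ioo)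
      isClosed_closure
  have hfiber : Icc x y ⊆ p ⁻¹' {p r₀} := by
    refine hdense.trans (closure_minimal ?_ (isClosed_singleton.preimage hp))
    rintro _ ⟨⟨hxr, hry⟩, r, rfl⟩
    rcases le_total r r₀ with hrr₀ | hr₀r
    · exact hrat r r₀ hxr.le (by exact_mod_cast hrr₀) hr₀y.le
    · exact (hrat r₀ r hxr₀.le (by exact_mod_cast hr₀r) hry.le).symm
  exact h (subsingleton_singleton.anti (image_subset_iff.2 hfiber))

theorem exists_monotone_collapse {X : Type*} [TopologicalSpace X] [T2Space X] {p : ℝ → X}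
    (hp : Continuous p) (hK : IsCompact (range p)) :
    ∃ φ : ℝ → ℝ, Continuous φ ∧ Monotone φ ∧
      ∀ ⦃x y⦄, x ≤ y → (φ x = φ y ↔ (p '' Icc x y).Subsingleton) := by
  have hsep : ∀ rs : ℚ × ℚ, ∃ f : ℝ → ℝ, Continuous f ∧
      (∀ t, f t ∈ Icc (0 : ℝ) 1) ∧ (∀ u v, p u = p v → f u = f v) ∧
      (p rs.1 ≠ p rs.2 → f rs.1 < f rs.2) := by
    intro rs
    by_cases hrs : p rs.1 = p rs.2
    · exact ⟨0, continuous_const, fun _ => ⟨le_rfl, zero_le_one⟩, fun _ _ _ => rfl,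
        fun hne => (hne hrs).elim⟩
    · obtain ⟨f, hfc, hf01, hfp, hlt⟩ := exists_continuous_factor_lt hp hK hrs
      exact ⟨f, hfc, hf01, hfp, fun _ => hlt⟩
  choose f hfc hf01 hfp hflt using hsep
  set F : ℚ × ℚ → ℝ → ℝ := fun rs => runningSup (f rs) rs.1
  set w : ℚ × ℚ → ℝ := fun rs => (1 / 2) ^ Encodable.encode rs
  have hw : Summable w := summable_geometric_two.comp_injective Encodable.encode_injective
  have hw0 : ∀ rs, 0 < w rs := fun rs => by positivity
  have hF01 : ∀ rs t, F rs t ∈ Icc (0 : ℝ) 1 := fun rs => runningSup_mem_Icc (hf01 rs)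
  have hFm : ∀ rs, Monotone (F rs) := fun rs => monotone_runningSup (hfc rs)
  refine ⟨fun t => ∑' rs, w rs * F rs t,
    continuous_tsum_mul hw (fun rs => (hw0 rs).le) hF01 fun rs => continuous_runningSup (hfc rs),
    monotone_tsum_mul hw (fun rs => (hw0 rs).le) hF01 hFm,
    fun x y hxy => ⟨fun heq => ?_, fun hc => ?_⟩⟩
  · by_contra hnc
    obtain ⟨r, s, hxr, hrs, hsy, hne⟩ := exists_rat_mem_Icc_ne_of_not_subsingleton hp hnc
    refine (tsum_mul_lt_tsum_mul hw hw0 hF01 hFm hxy (i := (r, s)) ?_).ne heq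
    exact runningSup_lt_runningSup (hfc _) hxr (by exact_mod_cast hrs) hsy (hflt _ hne)
  · refine tsum_congr fun rs => congrArg _ (runningSup_eq_of_subsingleton hxy ?_)
    rintro _ ⟨u, hu, rfl⟩ _ ⟨v, hv, rfl⟩
    exact hfp rs u v (hc (mem_image_of_mem p hu) (mem_image_of_mem p hv))

theorem exists_reparam_fibers_eq {φ₀ : ℝ → ℝ} (hc : ContinuousOn φ₀ (Icc 0 1))
    (hm : MonotoneOn φ₀ (Icc 0 1)) (h01 : φ₀ 0 ≠ φ₀ 1) :
    ∃ φ : ℝ → ℝ, Reparam φ ∧ ∀ x y, φ x = φ y ↔ φ₀ x = φ₀ y := by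
  have hI0 : (0 : ℝ) ∈ Icc (0 : ℝ) 1 := left_mem_Icc.2 zero_le_one
  have hI1 : (1 : ℝ) ∈ Icc (0 : ℝ) 1 := right_mem_Icc.2 zero_le_one
  have hd : 0 < φ₀ 1 - φ₀ 0 := sub_pos.2 ((hm hI0 hI1 zero_le_one).lt_of_ne h01)
  refine ⟨fun t => (φ₀ t - φ₀ 0) / (φ₀ 1 - φ₀ 0),
    ⟨(hc.sub continuousOn_const).div_const _,
      fun x hx y hy hxy => div_le_div_of_nonneg_right (sub_le_sub_right (hm hx hy hxy) _) hd.le,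
      fun t ht => ⟨div_nonneg (sub_nonneg.2 (hm hI0 ht ht.1)) hd.le,
        (div_le_one hd).2 (sub_le_sub_right (hm ht hI1 ht.2) _)⟩,
      by simp, div_self hd.ne'⟩,
    fun x y => by rw [div_left_inj' hd.ne', sub_left_inj]⟩

theorem Reparam.surjOn {φ : ℝ → ℝ} (hφ : Reparam φ) : SurjOn φ (Icc 0 1) (Icc 0 1) := by
  have := intermediate_value_Icc zero_le_one hφ.1
  rwa [hφ.2.2.2.1, hφ.2.2.2.2] at this

theorem IsCompact.continuousOn_of_comp {α β γ : Type*} [TopologicalSpace α]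
    [TopologicalSpace β] [T2Space β] [TopologicalSpace γ] {s : Set α} {t : Set β}
    (hs : IsCompact s) {φ : α → β} {q : β → γ} (hφ : ContinuousOn φ s)
    (hst : MapsTo φ s t) (hsurj : SurjOn φ s t) (hq : ContinuousOn (q ∘ φ) s) :
    ContinuousOn q t := by
  have : CompactSpace s := isCompact_iff_compactSpace.1 hs
  have hΦ : Continuous (hst.restrict φ s t) := hφ.mapsToRestrict hst
  have hquot : Topology.IsQuotientMap (hst.restrict φ s t) :=
    hΦ.isClosedMap.isQuotientMap hΦ (hst.restrict_surjective_iff.2 hsurj)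
  rw [continuousOn_iff_continuous_domRestrict, hquot.continuous_iff]
  exact hq.domRestrict

theorem exists_regular_factor {X : Type*} [TopologicalSpace X] {p : ℝ → X}
    (hp : ContinuousOn p (Icc 0 1)) {φ : ℝ → ℝ} (hφ : Reparam φ)
    (hfib : ∀ x ∈ Icc (0 : ℝ) 1, ∀ y ∈ Icc (0 : ℝ) 1, x ≤ y →
      (φ x = φ y ↔ (p '' Icc x y).Subsingleton)) :
    ∃ q : ℝ → X, ContinuousOn q (Icc 0 1) ∧ IsRegularPath q ∧
      ∀ t ∈ Icc (0 : ℝ) 1, p t = q (φ t) := by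
  have hsurj := hφ.surjOn
  obtain ⟨hφc, hφm, hφI, -, -⟩ := hφ
  set σ := invFunOn φ (Icc 0 1)
  have hσ : ∀ u ∈ Icc (0 : ℝ) 1, σ u ∈ Icc (0 : ℝ) 1 ∧ φ (σ u) = u :=
    fun u hu => invFunOn_pos (hsurj hu)
  have hp_eq : ∀ x ∈ Icc (0 : ℝ) 1, ∀ y ∈ Icc (0 : ℝ) 1, φ x = φ y → p x = p y := by
    intro x hx y hy hxy
    rcases le_total x y with h | h
    · exact (hfib x hx y hy h).1 hxy (mem_image_of_mem p (left_mem_Icc.2 h))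
        (mem_image_of_mem p (right_mem_Icc.2 h))
    · exact (hfib y hy x hx h).1 hxy.symm (mem_image_of_mem p (right_mem_Icc.2 h))
        (mem_image_of_mem p (left_mem_Icc.2 h))
  have hfac : ∀ t ∈ Icc (0 : ℝ) 1, p t = p (σ (φ t)) := fun t ht =>
    hp_eq t ht _ (hσ _ (hφI ht)).1 (hσ _ (hφI ht)).2.symm
  refine ⟨p ∘ σ, isCompact_Icc.continuousOn_of_comp hφc hφI hsurj
    (hp.congr fun t ht => (hfac t ht).symm), Or.inr fun A B hA hAB hB => ?_, hfac⟩
  by_contra! hconst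
  have hAI : A ∈ Icc (0 : ℝ) 1 := ⟨hA, hAB.le.trans hB⟩
  have hBI : B ∈ Icc (0 : ℝ) 1 := ⟨hA.trans hAB.le, hB⟩
  obtain ⟨hx, hφx⟩ := hσ A hAI
  obtain ⟨hy, hφy⟩ := hσ B hBI
  have hxy : σ A < σ B := hφm.reflect_lt hx hy (by rw [hφx, hφy]; exact hAB)
  have hsub : Icc (σ A) (σ B) ⊆ Icc (0 : ℝ) 1 := Icc_subset_Icc hx.1 hy.2
  have hφAB : ∀ u ∈ Icc (σ A) (σ B), φ u ∈ Icc A B := fun u hu =>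
    ⟨hφx ▸ hφm hx (hsub hu) hu.1, hφy ▸ hφm (hsub hu) hy hu.2⟩
  refine hAB.ne ?_
  rw [← hφx, ← hφy, hfib _ hx _ hy hxy.le]
  rintro _ ⟨u, hu, rfl⟩ _ ⟨v, hv, rfl⟩
  rw [hfac u (hsub hu), hfac v (hsub hv)]
  exact hconst _ (hφAB u hu) _ (hφAB v hv)

/-- Every continuous path into a Hausdorff space factors as a regular path
composed with a reparametrization. -/
theorem stmt_14 {X : Type*} [TopologicalSpace X] [T2Space X]
    (p : ℝ → X) (hp : ContinuousOn p (Set.Icc 0 1)) :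
    ∃ q : ℝ → X, ∃ φ : ℝ → ℝ,
      ContinuousOn q (Set.Icc 0 1) ∧ IsRegularPath q ∧ Reparam φ ∧
      ∀ t ∈ Set.Icc (0:ℝ) 1, p t = q (φ t) := by
  by_cases hconst : (p '' Icc 0 1).Subsingleton
  · refine ⟨fun _ => p 0, id, continuousOn_const, Or.inl fun _ _ _ _ => rfl,
      ⟨continuousOn_id, monotoneOn_id, mapsTo_id _, rfl, rfl⟩, fun t ht => ?_⟩
    exact hconst (mem_image_of_mem p ht) (mem_image_of_mem p (left_mem_Icc.2 zero_le_one))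
  obtain ⟨P, hPc, hPK, hPp⟩ : ∃ P : ℝ → X, Continuous P ∧ IsCompact (range P) ∧
      EqOn P p (Icc 0 1) :=
    ⟨IccExtend zero_le_one ((Icc (0 : ℝ) 1).domRestrict p),
      continuous_IccExtend_iff.2 hp.domRestrict,
      by rw [IccExtend_range]; exact isCompact_range hp.domRestrict,
      fun t ht => IccExtend_of_mem _ _ ht⟩
  obtain ⟨φ₀, hφ₀c, hφ₀m, hφ₀fib⟩ := exists_monotone_collapse hPc hPK
  have hfib : ∀ x ∈ Icc (0 : ℝ) 1, ∀ y ∈ Icc (0 : ℝ) 1, x ≤ y →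
      (φ₀ x = φ₀ y ↔ (p '' Icc x y).Subsingleton) := fun x hx y hy hxy => by
    rw [hφ₀fib hxy, (hPp.mono (Icc_subset_Icc hx.1 hy.2)).image_eq]
  obtain ⟨φ, hφ, hφφ₀⟩ :=
    exists_reparam_fibers_eq hφ₀c.continuousOn (hφ₀m.monotoneOn _)
    fun h01 => hconst ((hfib 0 (left_mem_Icc.2 zero_le_one) 1 (right_mem_Icc.2 zero_le_one)
      zero_le_one).1 h01)
  obtain ⟨q, hq, hreg, hpq⟩ := exists_regular_factor hp hφ fun x hx y hy hxy => by
    rw [hφφ₀, hfib x hx y hy hxy]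
  exact ⟨q, φ, hq, hreg, hφ, hpq⟩
end

section
/- Let p : [0,1] → X be a continuous map into a Hausdorff space X, and let φ : [0,1] → [0,1] be a surjective weakly increasing map (a reparametrization) whose stop intervals, i.e. the non-degenerate closed intervals on which φ is constant, are exactly the maximal non-degenerate intervals of constancy of p. Then the induced map q : [0,1] → X with p = q ∘ φ is continuous. -/
open Set Classical

/-- `J` is a stop interval of the path `p`: a maximal non-degenerate closed
subinterval of `[0,1]` on which `p` is constant. -/
def IsPathStopInterval {X : Type*} (p : ℝ → X) (J : Set ℝ) : Prop :=
  (∃ a b : ℝ, 0 ≤ a ∧ a < b ∧ b ≤ 1 ∧ J = Set.Icc a b) ∧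
  (∀ s ∈ J, ∀ t ∈ J, p s = p t) ∧
  (∀ J' : Set ℝ, (∃ a b : ℝ, 0 ≤ a ∧ a ≤ b ∧ b ≤ 1 ∧ J' = Set.Icc a b) →
    J ⊆ J' → (∀ s ∈ J', ∀ t ∈ J', p s = p t) → J' = J)

/-- If `φ` is a reparametrization whose stop intervals are exactly the maximal
intervals of constancy of a continuous path `p`, and `q` satisfies
`q ∘ φ = p` on `[0,1]`, then `q` is continuous on `[0,1]`. -/
theorem stmt_16 {X : Type*} [TopologicalSpace X] [T2Space X]
    (p : ℝ → X) (hp : ContinuousOn p (Set.Icc 0 1))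
    (φ : ℝ → ℝ) (hφ : Reparam φ)
    (hstop : {J | IsStopIntervalOf φ J} = {J | IsPathStopInterval p J})
    (q : ℝ → X) (hq : ∀ s ∈ Set.Icc (0:ℝ) 1, q (φ s) = p s) :
    ContinuousOn q (Set.Icc 0 1) := by
  obtain ⟨hc, hm, hmap, h0, h1⟩ := hφ
  rw [continuousOn_iff_continuous_restrict]
  let φ' : Set.Icc (0:ℝ) 1 → Set.Icc (0:ℝ) 1 := fun s => ⟨φ s, hmap s.2⟩
  have hφ'c : Continuous φ' :=
    Continuous.subtype_mk (continuousOn_iff_continuous_restrict.mp hc) _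
  have hsurj : Function.Surjective φ' := by
    intro t
    have ht : (t:ℝ) ∈ φ '' Set.Icc 0 1 :=
      intermediate_value_Icc (by norm_num) hc (by rw [h0, h1]; exact t.2)
    obtain ⟨s, hs, hst⟩ := ht
    exact ⟨⟨s, hs⟩, Subtype.ext hst⟩
  have hquot : Topology.IsQuotientMap φ' := (hφ'c.isClosedMap).isQuotientMap hφ'c hsurj
  rw [hquot.continuous_iff]
  have heq : ((Set.Icc (0:ℝ) 1).restrict q) ∘ φ' = (Set.Icc (0:ℝ) 1).restrict p := by
    funext s
    simp only [Function.comp_apply, Set.restrict_apply, φ']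
    exact hq s s.2
  rw [show (Set.Icc (0:ℝ) 1).domRestrict q ∘ φ' = _ from heq]
  exact continuousOn_iff_continuous_restrict.mp hp
end
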